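/- arXiv:2003.09174 — 10 statements merged into one kernel-verified Lean document; each statement's English description precedes it below -/
import Mathlib

section
/- Let A, B : E → E* be self-adjoint linear operators on an n-dimensional real vector space E with 0 ≺ A ⪯ B. Then for any nonzero u ∈ E, A - (A u u* A)/⟨A u, u⟩ ⪯ B - (B u u* B)/⟨B u, u⟩, i.e., for all h ∈ E, ⟨A h, h⟩ - ⟨A u, h⟩²/⟨A u, u⟩ ≤ ⟨B h, h⟩ - ⟨B u, h⟩²/⟨B u, u⟩. -/
open Matrix

/-!
For a symmetric `M` with `u ⬝ᵥ M *ᵥ u > 0`, completing the square in `t` shows that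
`h ⬝ᵥ M *ᵥ h - (u ⬝ᵥ M *ᵥ h) ^ 2 / (u ⬝ᵥ M *ᵥ u)` is the minimum of the quadratic form of `M` on the
line `h - t • u`. Since `A ⪯ B` pointwise, evaluating the `A`-form at the point of that line where
the `B`-form attains its minimum gives the inequality.
-/

namespace Matrix

variable {ι : Type*} [Fintype ι]

theorem IsSymm.dotProduct_mulVec_comm {R : Type*} [CommSemiring R] {M : Matrix ι ι R}
    (hM : M.IsSymm) (x y : ι → R) : x ⬝ᵥ M *ᵥ y = y ⬝ᵥ M *ᵥ x := by
  rw [← dotProduct_transpose_mulVec, hM.eq]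

theorem PosSemidef.dotProduct_mulVec_le {R : Type*} [Ring R] [PartialOrder R] [StarRing R]
    [IsOrderedAddMonoid R] {A B : Matrix ι ι R} (hAB : (B - A).PosSemidef) (x : ι → R) :
    star x ⬝ᵥ A *ᵥ x ≤ star x ⬝ᵥ B *ᵥ x := by
  simpa [sub_mulVec, dotProduct_sub] using hAB.dotProduct_mulVec_nonneg x

theorem IsSymm.dotProduct_mulVec_sub_smul {K : Type*} [Field K] {M : Matrix ι ι K}
    (hM : M.IsSymm) {u : ι → K} (hu : u ⬝ᵥ M *ᵥ u ≠ 0) (h : ι → K) (t : K) :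
    (h - t • u) ⬝ᵥ M *ᵥ (h - t • u) =
      h ⬝ᵥ M *ᵥ h - (u ⬝ᵥ M *ᵥ h) ^ 2 / (u ⬝ᵥ M *ᵥ u) +
        (u ⬝ᵥ M *ᵥ u) * (t - (u ⬝ᵥ M *ᵥ h) / (u ⬝ᵥ M *ᵥ u)) ^ 2 := by
  simp only [mulVec_sub, mulVec_smul, dotProduct_sub, sub_dotProduct, dotProduct_smul,
    smul_dotProduct, smul_eq_mul, hM.dotProduct_mulVec_comm h u]
  field_simp
  ring

theorem IsSymm.isLeast_dotProduct_mulVec_sub_smul {K : Type*} [Field K] [LinearOrder K]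
    [IsStrictOrderedRing K] {M : Matrix ι ι K} (hM : M.IsSymm) {u : ι → K}
    (hu : 0 < u ⬝ᵥ M *ᵥ u) (h : ι → K) :
    IsLeast (Set.range fun t : K ↦ (h - t • u) ⬝ᵥ M *ᵥ (h - t • u))
      (h ⬝ᵥ M *ᵥ h - (u ⬝ᵥ M *ᵥ h) ^ 2 / (u ⬝ᵥ M *ᵥ u)) := by
  refine ⟨⟨(u ⬝ᵥ M *ᵥ h) / (u ⬝ᵥ M *ᵥ u), ?_⟩, Set.forall_mem_range.2 fun t ↦ ?_⟩
  · simp [hM.dotProduct_mulVec_sub_smul hu.ne']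
  · rw [hM.dotProduct_mulVec_sub_smul hu.ne']
    exact le_add_of_nonneg_right (by positivity)

end Matrix

theorem projection_lemma {n : ℕ} (A B : Matrix (Fin n) (Fin n) ℝ)
    (hA : A.PosDef) (hB : B.IsSymm) (hAB : (B - A).PosSemidef)
    (u : Fin n → ℝ) (hu : u ≠ 0) :
    ∀ h : Fin n → ℝ,
      h ⬝ᵥ A.mulVec h - (u ⬝ᵥ A.mulVec h) ^ 2 / (u ⬝ᵥ A.mulVec u) ≤
        h ⬝ᵥ B.mulVec h - (u ⬝ᵥ B.mulVec h) ^ 2 / (u ⬝ᵥ B.mulVec u) := by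
  intro h
  have hA_symm : A.IsSymm := isHermitian_iff_isSymm.mp hA.isHermitian
  have hAu : 0 < u ⬝ᵥ A *ᵥ u := by simpa using hA.dotProduct_mulVec_pos hu
  have hBu : 0 < u ⬝ᵥ B *ᵥ u := hAu.trans_le (by simpa using hAB.dotProduct_mulVec_le u)
  obtain ⟨⟨t, hBt⟩, -⟩ := hB.isLeast_dotProduct_mulVec_sub_smul hBu h
  calc h ⬝ᵥ A *ᵥ h - (u ⬝ᵥ A *ᵥ h) ^ 2 / (u ⬝ᵥ A *ᵥ u)
      ≤ (h - t • u) ⬝ᵥ A *ᵥ (h - t • u) :=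
        (hA_symm.isLeast_dotProduct_mulVec_sub_smul hAu h).2 ⟨t, rfl⟩
    _ ≤ (h - t • u) ⬝ᵥ B *ᵥ (h - t • u) := by
        simpa using hAB.dotProduct_mulVec_le (h - t • u)
    _ = h ⬝ᵥ B *ᵥ h - (u ⬝ᵥ B *ᵥ h) ^ 2 / (u ⬝ᵥ B *ᵥ u) := hBt
end

section
/- Let A, G be symmetric positive definite n×n matrices, φ ∈ ℝ, and u a nonzero vector. Define the Broyden update Broyd_φ(A,G,u) = φ[G - (A u uᵀ G + G u uᵀ A)/(uᵀ A u) + (uᵀ G u/(uᵀ A u) + 1)(A u uᵀ A)/(uᵀ A u)] + (1-φ)[G - (G u uᵀ G)/(uᵀ G u) + (A u uᵀ A)/(uᵀ A u)]. Then det(G⁻¹ Broyd_φ(A,G,u)) = φ (uᵀ A G⁻¹ A u)/(uᵀ A u) + (1-φ)(uᵀ A u)/(uᵀ G u). -/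
open Matrix

noncomputable def DFPupd {n : ℕ} (A G : Matrix (Fin n) (Fin n) ℝ) (u : Fin n → ℝ) :
    Matrix (Fin n) (Fin n) ℝ :=
  G - ((u ⬝ᵥ A.mulVec u)⁻¹) •
      (vecMulVec (A.mulVec u) (G.mulVec u) + vecMulVec (G.mulVec u) (A.mulVec u))
    + (((u ⬝ᵥ G.mulVec u) / (u ⬝ᵥ A.mulVec u) + 1) * (u ⬝ᵥ A.mulVec u)⁻¹) •
      vecMulVec (A.mulVec u) (A.mulVec u)

noncomputable def BFGSupd {n : ℕ} (A G : Matrix (Fin n) (Fin n) ℝ) (u : Fin n → ℝ) :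
    Matrix (Fin n) (Fin n) ℝ :=
  G - ((u ⬝ᵥ G.mulVec u)⁻¹) • vecMulVec (G.mulVec u) (G.mulVec u)
    + ((u ⬝ᵥ A.mulVec u)⁻¹) • vecMulVec (A.mulVec u) (A.mulVec u)

noncomputable def Broyd {n : ℕ} (φ : ℝ) (A G : Matrix (Fin n) (Fin n) ℝ) (u : Fin n → ℝ) :
    Matrix (Fin n) (Fin n) ℝ :=
  if u = 0 then G else φ • DFPupd A G u + (1 - φ) • BFGSupd A G u

/-- Closeness measure θ(A, G, u). -/
noncomputable def theta {n : ℕ} (A G : Matrix (Fin n) (Fin n) ℝ) (u : Fin n → ℝ) : ℝ :=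
  if u = 0 then 0 else
    Real.sqrt ((u ⬝ᵥ ((G - A) * A⁻¹ * (G - A)).mulVec u) /
      (u ⬝ᵥ (G * A⁻¹ * G).mulVec u))

/-- Trace potential σ(A, G). -/
noncomputable def sigmaPot {n : ℕ} (A G : Matrix (Fin n) (Fin n) ℝ) : ℝ :=
  (A⁻¹ * (G - A)).trace

/-- Byrd–Nocedal potential ψ(A, G). -/
noncomputable def psiPot {n : ℕ} (A G : Matrix (Fin n) (Fin n) ℝ) : ℝ :=
  (A⁻¹ * (G - A)).trace - Real.log (A⁻¹ * G).det

noncomputable def omegaFn (t : ℝ) : ℝ := t - Real.log (1 + t)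


/-!
Both updates add to `G` rank-one terms built from `A u` and `G u`, so
`G⁻¹ Broyd_φ = 1 + p r₁ᵀ + u r₂ᵀ` with `p = G⁻¹ A u`. By the Weinstein–Aronszajn identity its
determinant is the determinant of `1 + [r₁ r₂]ᵀ [p u]`, a 2×2 matrix whose entries reduce, by symmetry
of `A` and `G`, to `uᵀAu`, `uᵀGu` and `uᵀAG⁻¹Au`.
-/

namespace Matrix

variable {ι R : Type*} [Fintype ι] [CommRing R]

lemma IsSymm.mulVec_dotProduct {M : Matrix ι ι R} (hM : M.IsSymm) (x y : ι → R) :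
    M *ᵥ x ⬝ᵥ y = x ⬝ᵥ M *ᵥ y := by
  rw [dotProduct_comm, ← dotProduct_transpose_mulVec, hM.eq]

lemma det_one_add_vecMulVec_add_vecMulVec [DecidableEq ι] (x₁ x₂ y₁ y₂ : ι → R) :
    det (1 + vecMulVec x₁ y₁ + vecMulVec x₂ y₂) =
      (1 + y₁ ⬝ᵥ x₁) * (1 + y₂ ⬝ᵥ x₂) - (y₁ ⬝ᵥ x₂) * (y₂ ⬝ᵥ x₁) := by
  have hsplit : vecMulVec x₁ y₁ + vecMulVec x₂ y₂ = (of ![x₁, x₂])ᵀ * of ![y₁, y₂] := by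
    ext i j
    simp [mul_apply, Fin.sum_univ_two, vecMulVec_apply]
  rw [add_assoc, hsplit, det_one_add_mul_comm, det_fin_two]
  simp [vecMul, dotProduct]

end Matrix

lemma Broyd_eq_add_vecMulVec_add_vecMulVec {n : ℕ} (φ : ℝ) (A G : Matrix (Fin n) (Fin n) ℝ)
    {u : Fin n → ℝ} (hu : u ≠ 0) :
    Broyd φ A G u = G
      + vecMulVec (A *ᵥ u) (((φ * (u ⬝ᵥ G *ᵥ u) / (u ⬝ᵥ A *ᵥ u) + 1) / (u ⬝ᵥ A *ᵥ u)) • A *ᵥ u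
          - (φ / (u ⬝ᵥ A *ᵥ u)) • G *ᵥ u)
      + vecMulVec (G *ᵥ u) (-(φ / (u ⬝ᵥ A *ᵥ u)) • A *ᵥ u
          - ((1 - φ) / (u ⬝ᵥ G *ᵥ u)) • G *ᵥ u) := by
  rw [Broyd, if_neg hu]
  ext i j
  simp only [DFPupd, BFGSupd, Matrix.add_apply, Matrix.sub_apply, Matrix.smul_apply,
    vecMulVec_apply, Pi.sub_apply, Pi.smul_apply, smul_eq_mul]
  ring

theorem det_broyden_update {n : ℕ} (A G : Matrix (Fin n) (Fin n) ℝ)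
    (hA : A.PosDef) (hG : G.PosDef) (φ : ℝ) (u : Fin n → ℝ) (hu : u ≠ 0) :
    (G⁻¹ * Broyd φ A G u).det =
      φ * (u ⬝ᵥ (A * G⁻¹ * A).mulVec u) / (u ⬝ᵥ A.mulVec u) +
        (1 - φ) * (u ⬝ᵥ A.mulVec u) / (u ⬝ᵥ G.mulVec u) := by
  have ha : u ⬝ᵥ A *ᵥ u ≠ 0 := (hA.dotProduct_mulVec_pos hu).ne'
  have hg : u ⬝ᵥ G *ᵥ u ≠ 0 := (hG.dotProduct_mulVec_pos hu).ne'
  have hGdet : IsUnit G.det := hG.det_pos.ne'.isUnit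
  have hGu : G⁻¹ *ᵥ G *ᵥ u = u := by
    rw [mulVec_mulVec, nonsing_inv_mul G hGdet, one_mulVec]
  have hAs : A.IsSymm := isHermitian_iff_isSymm.mp hA.isHermitian
  have hGs : G.IsSymm := isHermitian_iff_isSymm.mp hG.isHermitian
  have hGp : G *ᵥ u ⬝ᵥ G⁻¹ *ᵥ A *ᵥ u = u ⬝ᵥ A *ᵥ u := by
    rw [hGs.mulVec_dotProduct, mulVec_mulVec, mul_nonsing_inv G hGdet, one_mulVec]
  have hAp : A *ᵥ u ⬝ᵥ G⁻¹ *ᵥ A *ᵥ u = u ⬝ᵥ (A * G⁻¹ * A) *ᵥ u := by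
    rw [hAs.mulVec_dotProduct, mulVec_mulVec, mulVec_mulVec, Matrix.mul_assoc]
  rw [Broyd_eq_add_vecMulVec_add_vecMulVec φ A G hu, Matrix.mul_add, Matrix.mul_add,
    nonsing_inv_mul G hGdet, mul_vecMulVec, mul_vecMulVec, hGu,
    det_one_add_vecMulVec_add_vecMulVec]
  simp only [sub_dotProduct, smul_dotProduct, smul_eq_mul, hGp, hAp, dotProduct_comm (A *ᵥ u) u,
    dotProduct_comm (G *ᵥ u) u]
  field_simp
  ring
end

section
/- Let A, G be symmetric positive definite n×n matrices with A ⪯ G ⪯ η A for some η ≥ 1. For any u and nonzero direction, define the DFP update G⁺ = DFP(A,G,u). Then DFP(A,G,u) ⪯ η A - (η-1)(A u uᵀ A)/(uᵀ A u), and in particular DFP(A,G,u) ⪯ η A. -/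
open Matrix

/-! With `P = I - A u uᵀ / (uᵀ A u)` one has `DFP(A, G, u) = P G Pᵀ + A u uᵀ A / (uᵀ A u)`, and the
case `G = A` (where the update is the identity) gives `P A Pᵀ = A - A u uᵀ A / (uᵀ A u)`. Hence
`η A - (η - 1) A u uᵀ A / (uᵀ A u) - DFP(A, G, u) = P (η A - G) Pᵀ`, a congruence of a positive
semidefinite matrix; adding back the positive semidefinite rank-one term gives `DFP(A, G, u) ⪯ η A`. -/

noncomputable def dfpProj {n : ℕ} (A : Matrix (Fin n) (Fin n) ℝ) (u : Fin n → ℝ) :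
    Matrix (Fin n) (Fin n) ℝ :=
  1 - (u ⬝ᵥ A *ᵥ u)⁻¹ • vecMulVec (A *ᵥ u) u

section DFPupd

variable {n : ℕ} {A G : Matrix (Fin n) (Fin n) ℝ} {u : Fin n → ℝ}

theorem DFPupd_eq_dfpProj_mul_mul_transpose_add (hG : G.IsSymm) :
    DFPupd A G u = dfpProj A u * G * (dfpProj A u)ᵀ
      + (u ⬝ᵥ A *ᵥ u)⁻¹ • vecMulVec (A *ᵥ u) (A *ᵥ u) := by
  have hGu : u ᵥ* G = G *ᵥ u := by rw [← mulVec_transpose, hG.eq]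
  have hgu : G *ᵥ u ⬝ᵥ u = u ⬝ᵥ G *ᵥ u := dotProduct_comm _ _
  simp only [dfpProj, DFPupd, transpose_sub, transpose_one, transpose_smul, transpose_vecMulVec,
    Matrix.sub_mul, Matrix.mul_sub, Matrix.one_mul, Matrix.mul_one, Matrix.smul_mul,
    Matrix.mul_smul, vecMulVec_mul, mul_vecMulVec, hGu, sub_mulVec, smul_mulVec, vecMulVec_mulVec,
    op_smul_eq_smul, sub_vecMulVec, smul_vecMulVec, hgu]
  module

theorem DFPupd_self (hs : u ⬝ᵥ A *ᵥ u ≠ 0) : DFPupd A A u = A := by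
  rw [DFPupd, div_self hs]
  module

theorem dfpProj_mul_mul_transpose_self (hA : A.IsSymm) (hs : u ⬝ᵥ A *ᵥ u ≠ 0) :
    dfpProj A u * A * (dfpProj A u)ᵀ = A - (u ⬝ᵥ A *ᵥ u)⁻¹ • vecMulVec (A *ᵥ u) (A *ᵥ u) := by
  have h := DFPupd_eq_dfpProj_mul_mul_transpose_add (A := A) (u := u) hA
  rw [DFPupd_self hs] at h
  rw [eq_sub_iff_add_eq, ← h]

theorem sub_DFPupd_eq_dfpProj_mul_mul_transpose (hA : A.IsSymm) (hG : G.IsSymm)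
    (hs : u ⬝ᵥ A *ᵥ u ≠ 0) (η : ℝ) :
    η • A - ((η - 1) * (u ⬝ᵥ A *ᵥ u)⁻¹) • vecMulVec (A *ᵥ u) (A *ᵥ u) - DFPupd A G u
      = dfpProj A u * (η • A - G) * (dfpProj A u)ᵀ := by
  rw [Matrix.mul_sub, Matrix.sub_mul, Matrix.mul_smul, Matrix.smul_mul,
    dfpProj_mul_mul_transpose_self hA hs, DFPupd_eq_dfpProj_mul_mul_transpose_add hG]
  module

end DFPupd

theorem dfp_upper_bound_general {n : ℕ} (A G : Matrix (Fin n) (Fin n) ℝ)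
    (hA : A.PosDef) (hG : G.PosDef) (η : ℝ) (hη : 1 ≤ η)
    (hup : (η • A - G).PosSemidef)
    (u : Fin n → ℝ) (hu : u ≠ 0) :
    ((η • A - ((η - 1) * (u ⬝ᵥ A.mulVec u)⁻¹) • vecMulVec (A.mulVec u) (A.mulVec u))
        - DFPupd A G u).PosSemidef ∧
      (η • A - DFPupd A G u).PosSemidef := by
  have hs : 0 < u ⬝ᵥ A *ᵥ u := by simpa using hA.dotProduct_mulVec_pos hu
  have hbound : (η • A - ((η - 1) * (u ⬝ᵥ A *ᵥ u)⁻¹) • vecMulVec (A *ᵥ u) (A *ᵥ u)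
      - DFPupd A G u).PosSemidef := by
    rw [sub_DFPupd_eq_dfpProj_mul_mul_transpose (by simpa using hA.isHermitian)
      (by simpa using hG.isHermitian) hs.ne']
    simpa using hup.mul_mul_conjTranspose_same (dfpProj A u)
  have hrank_one : (((η - 1) * (u ⬝ᵥ A *ᵥ u)⁻¹) • vecMulVec (A *ᵥ u) (A *ᵥ u)).PosSemidef := by
    simpa using (posSemidef_vecMulVec_self_star (A *ᵥ u)).smul
      (mul_nonneg (sub_nonneg.2 hη) (inv_nonneg.2 hs.le))
  refine ⟨hbound, ?_⟩
  convert hbound.add hrank_one using 1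
  abel

theorem dfp_upper_bound {n : ℕ} (A G : Matrix (Fin n) (Fin n) ℝ)
    (hA : A.PosDef) (hG : G.PosDef) (η : ℝ) (hη : 1 ≤ η)
    (hlow : (G - A).PosSemidef) (hup : (η • A - G).PosSemidef)
    (u : Fin n → ℝ) (hu : u ≠ 0) :
    ((η • A - ((η - 1) * (u ⬝ᵥ A.mulVec u)⁻¹) • vecMulVec (A.mulVec u) (A.mulVec u))
        - DFPupd A G u).PosSemidef ∧
      (η • A - DFPupd A G u).PosSemidef :=
  dfp_upper_bound_general A G hA hG η hη hup u hu
end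

section
/- Let A, G be symmetric positive definite n×n matrices with A ⪯ G ⪯ η A for some η ≥ 1, let φ ∈ [0,1] and u any vector. Define σ(A,G) = tr(A⁻¹(G - A)) and θ(A,G,u) = [uᵀ(G-A)A⁻¹(G-A)u / (uᵀ G A⁻¹ G u)]^{1/2} (with θ = 0 if u = 0). Then σ(A,G) - σ(A, Broyd_φ(A,G,u)) ≥ (φ/η + 1 - φ)·θ(A,G,u)². -/
/-!
Write `a = uᵀAu`, `g = uᵀGu`, `q = uᵀ(G - A)A⁻¹(G - A)u` and `s = uᵀGA⁻¹Gu = q + 2g - a`.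
Since `σ(A, ·)` is affine, the progress of `Broyd_φ` is `φ` times that of DFP plus `1 - φ` times
that of BFGS; both updates differ from `G` by rank-two terms, whose traces against `A⁻¹` give
the progress `g/a - 1` for DFP and `s/g - 1` for BFGS, while `θ² = q/s`. From
`0 ⪯ G - A ⪯ (η - 1)A` and Cauchy–Schwarz one gets `q ≤ (η - 1)(g - a)`, and then elementary
inequalities show `θ²/η ≤ g/a - 1` and `θ² ≤ s/g - 1`.
-/

open Matrix

section QuadraticForms

variable {ι : Type*} [Fintype ι]

lemma Matrix.IsSymm.mulVec_dotProduct_s5 {R : Type*} [CommSemiring R] {M : Matrix ι ι R}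
    (hM : M.IsSymm) (x y : ι → R) :
    (M *ᵥ x) ⬝ᵥ y = x ⬝ᵥ M *ᵥ y := by
  rw [dotProduct_comm, dotProduct_mulVec, ← mulVec_transpose, hM.eq, dotProduct_comm]

lemma Matrix.trace_mul_vecMulVec {R : Type*} [CommSemiring R] (B : Matrix ι ι R)
    (v w : ι → R) :
    (B * vecMulVec v w).trace = w ⬝ᵥ B *ᵥ v := by
  rw [mul_vecMulVec, trace_vecMulVec, dotProduct_comm]

lemma Matrix.PosSemidef.dotProduct_mulVec_sq_le {M : Matrix ι ι ℝ} (hM : M.PosSemidef)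
    (x y : ι → ℝ) : (x ⬝ᵥ M *ᵥ y) ^ 2 ≤ (x ⬝ᵥ M *ᵥ x) * (y ⬝ᵥ M *ᵥ y) := by
  have hsymm : M.IsSymm := isHermitian_iff_isSymm.mp hM.isHermitian
  have hquad : ∀ t : ℝ,
      0 ≤ (x ⬝ᵥ M *ᵥ x) * (t * t) + (2 * (x ⬝ᵥ M *ᵥ y)) * t + y ⬝ᵥ M *ᵥ y := by
    intro t
    have h := hM.dotProduct_mulVec_nonneg (t • x + y)
    simp only [star_trivial, mulVec_add, mulVec_smul, dotProduct_add, add_dotProduct,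
      dotProduct_smul, smul_dotProduct, smul_eq_mul] at h
    rw [← hsymm.mulVec_dotProduct_s5 y x, dotProduct_comm (M *ᵥ y)] at h
    linear_combination h
  have := discrim_le_zero hquad
  rw [discrim] at this
  nlinarith

lemma Matrix.sub_mul_inv_mul_sub [DecidableEq ι] {R : Type*} [CommRing R] {A : Matrix ι ι R}
    (hA : IsUnit A.det) (G : Matrix ι ι R) : (G - A) * A⁻¹ * (G - A) = G * A⁻¹ * G - G - G + A := by
  have h1 : A * A⁻¹ = 1 := mul_nonsing_inv A hA
  have h2 : A⁻¹ * A = 1 := nonsing_inv_mul A hA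
  calc (G - A) * A⁻¹ * (G - A) = G * A⁻¹ * G - G * (A⁻¹ * A) - (A * A⁻¹) * G
        + (A * A⁻¹) * A := by noncomm_ring
    _ = _ := by rw [h1, h2, mul_one, one_mul, one_mul]

lemma Matrix.PosDef.dotProduct_mul_inv_mul_nonneg [DecidableEq ι] {A M : Matrix ι ι ℝ}
    (hA : A.PosDef) (hM : M.IsSymm) (u : ι → ℝ) : 0 ≤ u ⬝ᵥ (M * A⁻¹ * M) *ᵥ u := by
  have h := (hA.inv.posSemidef.conjTranspose_mul_mul_same M).dotProduct_mulVec_nonneg u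
  rwa [conjTranspose_eq_transpose_of_trivial, hM.eq, star_trivial] at h

lemma Matrix.PosDef.dotProduct_mul_inv_mul_le [DecidableEq ι] {A M : Matrix ι ι ℝ}
    (hA : A.PosDef) (hM : M.PosSemidef) {c : ℝ} (hc : 0 ≤ c) (hMA : (c • A - M).PosSemidef)
    (u : ι → ℝ) :
    u ⬝ᵥ (M * A⁻¹ * M) *ᵥ u ≤ c * (u ⬝ᵥ M *ᵥ u) := by
  have hM_symm : M.IsSymm := isHermitian_iff_isSymm.mp hM.isHermitian
  have hAAinv : A * A⁻¹ = 1 := mul_nonsing_inv A (isUnit_iff_ne_zero.2 hA.det_pos.ne')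
  set w := A⁻¹ *ᵥ (M *ᵥ u)
  set q := u ⬝ᵥ (M * A⁻¹ * M) *ᵥ u
  have hAw : A *ᵥ w = M *ᵥ u := by rw [mulVec_mulVec, hAAinv, one_mulVec]
  have hwMu : w ⬝ᵥ M *ᵥ u = q := by
    rw [dotProduct_comm, hM_symm.mulVec_dotProduct_s5, mulVec_mulVec, mulVec_mulVec]
  have hwAw : w ⬝ᵥ A *ᵥ w = q := by rw [hAw, hwMu]
  have hq : 0 ≤ q := hA.dotProduct_mul_inv_mul_nonneg hM_symm u
  have hwMw : w ⬝ᵥ M *ᵥ w ≤ c * q := by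
    have h := hMA.dotProduct_mulVec_nonneg w
    simp only [star_trivial, sub_mulVec, smul_mulVec, dotProduct_sub, dotProduct_smul,
      smul_eq_mul, hwAw] at h
    linarith
  have huMu : 0 ≤ u ⬝ᵥ M *ᵥ u := by simpa using hM.dotProduct_mulVec_nonneg u
  -- Cauchy–Schwarz for the form of `M`: `q² = (wᵀMu)² ≤ (wᵀMw)(uᵀMu) ≤ c q (uᵀMu)`.
  have hcs := hM.dotProduct_mulVec_sq_le w u
  rw [hwMu] at hcs
  rcases hq.eq_or_lt with hq0 | hqpos
  · rw [← hq0]; positivity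
  · nlinarith [mul_le_mul_of_nonneg_right hwMw huMu]

end QuadraticForms

section QuasiNewton

variable {n : ℕ} {A G : Matrix (Fin n) (Fin n) ℝ} {u : Fin n → ℝ}

lemma sigmaPot_sub_sigmaPot (A G H : Matrix (Fin n) (Fin n) ℝ) :
    sigmaPot A G - sigmaPot A H = (A⁻¹ * (G - H)).trace := by
  rw [sigmaPot, sigmaPot, ← trace_sub, ← mul_sub, sub_sub_sub_cancel_right]

lemma sigmaPot_sub_Broyd (φ : ℝ) (hu : u ≠ 0) :
    sigmaPot A G - sigmaPot A (Broyd φ A G u) =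
      φ * (A⁻¹ * (G - DFPupd A G u)).trace + (1 - φ) * (A⁻¹ * (G - BFGSupd A G u)).trace := by
  have hsplit : G - Broyd φ A G u = φ • (G - DFPupd A G u) + (1 - φ) • (G - BFGSupd A G u) := by
    rw [Broyd, if_neg hu]; module
  rw [sigmaPot_sub_sigmaPot, hsplit, mul_add, Matrix.mul_smul, Matrix.mul_smul, trace_add,
    trace_smul, trace_smul, smul_eq_mul, smul_eq_mul]

lemma trace_inv_mul_sub_DFPupd (hA : A.IsSymm) (hdet : IsUnit A.det) (ha : u ⬝ᵥ A *ᵥ u ≠ 0) :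
    (A⁻¹ * (G - DFPupd A G u)).trace = (u ⬝ᵥ G *ᵥ u) / (u ⬝ᵥ A *ᵥ u) - 1 := by
  have hAG : (G *ᵥ u) ⬝ᵥ A⁻¹ *ᵥ (A *ᵥ u) = u ⬝ᵥ G *ᵥ u := by
    rw [mulVec_mulVec, nonsing_inv_mul A hdet, one_mulVec, dotProduct_comm]
  have hGA : (A *ᵥ u) ⬝ᵥ A⁻¹ *ᵥ (G *ᵥ u) = u ⬝ᵥ G *ᵥ u := by
    rw [hA.mulVec_dotProduct_s5, mulVec_mulVec, mul_nonsing_inv A hdet, one_mulVec]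
  have hAA : (A *ᵥ u) ⬝ᵥ A⁻¹ *ᵥ (A *ᵥ u) = u ⬝ᵥ A *ᵥ u := by
    rw [mulVec_mulVec, nonsing_inv_mul A hdet, one_mulVec, dotProduct_comm]
  have hdiff : G - DFPupd A G u =
      (u ⬝ᵥ A *ᵥ u)⁻¹ • (vecMulVec (A *ᵥ u) (G *ᵥ u) + vecMulVec (G *ᵥ u) (A *ᵥ u))
        - (((u ⬝ᵥ G *ᵥ u) / (u ⬝ᵥ A *ᵥ u) + 1) * (u ⬝ᵥ A *ᵥ u)⁻¹) •
          vecMulVec (A *ᵥ u) (A *ᵥ u) := by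
    rw [DFPupd]; abel
  simp only [hdiff, mul_sub, mul_add, Matrix.mul_smul, trace_sub, trace_add, trace_smul,
    smul_eq_mul, trace_mul_vecMulVec, hAG, hGA, hAA]
  field_simp
  ring

lemma trace_inv_mul_sub_BFGSupd (hG : G.IsSymm) (hdet : IsUnit A.det)
    (ha : u ⬝ᵥ A *ᵥ u ≠ 0) :
    (A⁻¹ * (G - BFGSupd A G u)).trace = (u ⬝ᵥ (G * A⁻¹ * G) *ᵥ u) / (u ⬝ᵥ G *ᵥ u) - 1 := by
  have hGG : (G *ᵥ u) ⬝ᵥ A⁻¹ *ᵥ (G *ᵥ u) = u ⬝ᵥ (G * A⁻¹ * G) *ᵥ u := by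
    rw [hG.mulVec_dotProduct_s5, mulVec_mulVec, mulVec_mulVec]
  have hAA : (A *ᵥ u) ⬝ᵥ A⁻¹ *ᵥ (A *ᵥ u) = u ⬝ᵥ A *ᵥ u := by
    rw [mulVec_mulVec, nonsing_inv_mul A hdet, one_mulVec, dotProduct_comm]
  have hdiff : G - BFGSupd A G u =
      (u ⬝ᵥ G *ᵥ u)⁻¹ • vecMulVec (G *ᵥ u) (G *ᵥ u)
        - (u ⬝ᵥ A *ᵥ u)⁻¹ • vecMulVec (A *ᵥ u) (A *ᵥ u) := by
    rw [BFGSupd]; abel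
  simp only [hdiff, mul_sub, Matrix.mul_smul, trace_sub, trace_smul, smul_eq_mul,
    trace_mul_vecMulVec, hGG, hAA]
  field_simp

lemma theta_sq (hA : A.PosDef) (hG : G.IsSymm) (hu : u ≠ 0) :
    theta A G u ^ 2 =
      (u ⬝ᵥ ((G - A) * A⁻¹ * (G - A)) *ᵥ u) / (u ⬝ᵥ (G * A⁻¹ * G) *ᵥ u) := by
  have hGA : (G - A).IsSymm := hG.sub (isHermitian_iff_isSymm.mp hA.isHermitian)
  rw [theta, if_neg hu, Real.sq_sqrt (div_nonneg (hA.dotProduct_mul_inv_mul_nonneg hGA u)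
    (hA.dotProduct_mul_inv_mul_nonneg hG u))]

end QuasiNewton

section ScalarBounds

variable {a g q : ℝ}

lemma bfgs_gain_ge (ha : 0 < a) (hag : a ≤ g) (hq : 0 ≤ q) :
    q / (q + 2 * g - a) ≤ (q + 2 * g - a) / g - 1 := by
  have hg : 0 < g := ha.trans_le hag
  rw [div_sub_one hg.ne', div_le_div_iff₀ (by linarith) hg]
  nlinarith [mul_nonneg hq (sub_nonneg.2 hag), mul_nonneg ha.le (sub_nonneg.2 hag),
    sq_nonneg q, sq_nonneg (g - a)]

lemma dfp_gain_ge {η : ℝ} (hη : 0 < η) (ha : 0 < a) (hag : a ≤ g) (hq : 0 ≤ q)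
    (hqη : q ≤ (η - 1) * (g - a)) :
    q / (η * (q + 2 * g - a)) ≤ g / a - 1 := by
  rw [div_sub_one ha.ne', div_le_div_iff₀ (by nlinarith) ha]
  have hs : 0 ≤ q + 2 * g - 2 * a := by linarith
  nlinarith [mul_nonneg (mul_nonneg hη.le (sub_nonneg.2 hag)) hs, mul_nonneg hq ha.le]

lemma broyden_gain_ge {η φ : ℝ} (hη : 1 ≤ η) (hφ : φ ∈ Set.Icc (0 : ℝ) 1) (ha : 0 < a)
    (hag : a ≤ g) (hq : 0 ≤ q) (hqη : q ≤ (η - 1) * (g - a)) :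
    (φ / η + 1 - φ) * (q / (q + 2 * g - a)) ≤
      φ * (g / a - 1) + (1 - φ) * ((q + 2 * g - a) / g - 1) := by
  have hη0 : 0 < η := one_pos.trans_le hη
  calc (φ / η + 1 - φ) * (q / (q + 2 * g - a))
      = φ * (q / (η * (q + 2 * g - a))) + (1 - φ) * (q / (q + 2 * g - a)) := by
        rw [← div_div]; ring
    _ ≤ _ := add_le_add (mul_le_mul_of_nonneg_left (dfp_gain_ge hη0 ha hag hq hqη) hφ.1)
        (mul_le_mul_of_nonneg_left (bfgs_gain_ge ha hag hq) (sub_nonneg.2 hφ.2))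

end ScalarBounds

theorem sigma_progress {n : ℕ} (A G : Matrix (Fin n) (Fin n) ℝ)
    (hA : A.PosDef) (hG : G.PosDef) (η : ℝ) (hη : 1 ≤ η)
    (hlow : (G - A).PosSemidef) (hup : (η • A - G).PosSemidef)
    (φ : ℝ) (hφ : φ ∈ Set.Icc (0 : ℝ) 1) (u : Fin n → ℝ) :
    sigmaPot A G - sigmaPot A (Broyd φ A G u) ≥
      (φ / η + 1 - φ) * theta A G u ^ 2 := by
  by_cases hu : u = 0
  · simp [Broyd, theta, hu]
  have hdet : IsUnit A.det := isUnit_iff_ne_zero.2 hA.det_pos.ne'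
  have hAsymm : A.IsSymm := isHermitian_iff_isSymm.mp hA.isHermitian
  have hGsymm : G.IsSymm := isHermitian_iff_isSymm.mp hG.isHermitian
  have hGA : (G - A).IsSymm := isHermitian_iff_isSymm.mp hlow.isHermitian
  have ha : 0 < u ⬝ᵥ A *ᵥ u := by simpa using hA.dotProduct_mulVec_pos hu
  have hgap : u ⬝ᵥ (G - A) *ᵥ u = u ⬝ᵥ G *ᵥ u - u ⬝ᵥ A *ᵥ u := by
    rw [sub_mulVec, dotProduct_sub]
  have hag : u ⬝ᵥ A *ᵥ u ≤ u ⬝ᵥ G *ᵥ u := by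
    simpa [hgap] using hlow.dotProduct_mulVec_nonneg u
  have hqη := hA.dotProduct_mul_inv_mul_le hlow (sub_nonneg.2 hη)
    (by rwa [show (η - 1) • A - (G - A) = η • A - G by module]) u
  have hs : u ⬝ᵥ (G * A⁻¹ * G) *ᵥ u =
      u ⬝ᵥ ((G - A) * A⁻¹ * (G - A)) *ᵥ u + 2 * u ⬝ᵥ G *ᵥ u - u ⬝ᵥ A *ᵥ u := by
    simp only [sub_mul_inv_mul_sub hdet, sub_mulVec, add_mulVec, dotProduct_sub, dotProduct_add]
    ring
  rw [hgap] at hqη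
  rw [ge_iff_le, sigmaPot_sub_Broyd φ hu, trace_inv_mul_sub_DFPupd hAsymm hdet ha.ne',
    trace_inv_mul_sub_BFGSupd hGsymm hdet ha.ne', theta_sq hA hGsymm hu, hs]
  exact broyden_gain_ge hη hφ ha hag (hA.dotProduct_mul_inv_mul_nonneg hGA u) hqη
end

section
/- If A, G are symmetric matrices with 0 ⪯ G - A ⪯ η A and A positive definite (η ≥ 1 a real number), then (G - A) A⁻¹ (G - A) ⪯ η (G - A). -/
/-!
With `s = A^{1/2}` and `E = G - A`, the matrix `B = s⁻¹ E s⁻¹` satisfies `0 ≤ B ≤ η`.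
Conjugating `B ≤ η` by `B^{1/2}` gives `B² ≤ η B`, and conjugating that by `s` gives
`E A⁻¹ E ≤ η E`.
-/

open Matrix

open scoped MatrixOrder ComplexOrder

section

variable {R : Type*} [PartialOrder R] [Ring R] [StarRing R] [TopologicalSpace R]
  [StarOrderedRing R] [Algebra ℝ R] [ContinuousFunctionalCalculus ℝ R IsSelfAdjoint]
  [NonnegSpectrumClass ℝ R] [IsSemitopologicalRing R] [T2Space R]

theorem mul_self_le_smul_of_nonneg_of_le_smul_one {b : R} (hb : 0 ≤ b) {η : ℝ}
    (hbη : b ≤ η • 1) : b * b ≤ η • b := by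
  obtain ⟨s, hs, rfl⟩ : ∃ s, 0 ≤ s ∧ s * s = b :=
    ⟨CFC.sqrt b, CFC.sqrt_nonneg b, CFC.sqrt_mul_sqrt_self b hb⟩
  calc s * s * (s * s) = s * (s * s) * s := by simp only [mul_assoc]
    _ ≤ s * (η • 1) * s := conjugate_le_conjugate_of_nonneg hbη hs
    _ = η • (s * s) := by rw [mul_smul_comm, smul_mul_assoc, mul_one]

end

namespace Matrix

variable {n 𝕜 : Type*} [Fintype n] [DecidableEq n] [RCLike 𝕜]

theorem mul_inv_mul_le_smul_of_le_smul {A E : Matrix n n 𝕜} (hA : A.PosDef) (hE : 0 ≤ E)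
    {η : ℝ} (hEA : E ≤ η • A) : E * A⁻¹ * E ≤ η • E := by
  obtain ⟨s, hs, rfl⟩ : ∃ s, 0 ≤ s ∧ s * s = A :=
    ⟨CFC.sqrt A, CFC.sqrt_nonneg A, CFC.sqrt_mul_sqrt_self A hA.posSemidef.nonneg⟩
  have hs_det : IsUnit s.det := (isUnit_iff_isUnit_det s).1 (isUnit_of_mul_isUnit_left hA.isUnit)
  have hs_inv : IsSelfAdjoint s⁻¹ := hs.posSemidef.isHermitian.inv
  set b := s⁻¹ * E * s⁻¹
  have hbη : b ≤ η • 1 :=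
    calc b ≤ s⁻¹ * (η • (s * s)) * s⁻¹ := hs_inv.conjugate_le_conjugate hEA
      _ = η • 1 := by
        simp only [mul_smul_comm, smul_mul_assoc, nonsing_inv_mul_cancel_left (h := hs_det),
          mul_nonsing_inv _ hs_det]
  calc E * (s * s)⁻¹ * E = s * (b * b) * s := by
        simp only [b, mul_inv_rev, mul_assoc, mul_nonsing_inv_cancel_left (h := hs_det),
          nonsing_inv_mul _ hs_det, mul_one]
    _ ≤ s * (η • b) * s := conjugate_le_conjugate_of_nonneg
        (mul_self_le_smul_of_nonneg_of_le_smul_one (hs_inv.conjugate_nonneg hE) hbη) hs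
    _ = η • E := by
        simp only [b, mul_smul_comm, smul_mul_assoc, mul_assoc,
          mul_nonsing_inv_cancel_left (h := hs_det), nonsing_inv_mul _ hs_det, mul_one]

end Matrix

theorem sandwich_ineq_general {n : ℕ} (A G : Matrix (Fin n) (Fin n) ℝ)
    (hA : A.PosDef) (η : ℝ)
    (h1 : (G - A).PosSemidef) (h2 : (η • A - (G - A)).PosSemidef) :
    (η • (G - A) - (G - A) * A⁻¹ * (G - A)).PosSemidef :=
  le_iff.1 (mul_inv_mul_le_smul_of_le_smul hA h1.nonneg (le_iff.2 h2))

theorem sandwich_ineq {n : ℕ} (A G : Matrix (Fin n) (Fin n) ℝ)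
    (hA : A.PosDef) (hG : G.IsSymm) (η : ℝ) (hη : 1 ≤ η)
    (h1 : (G - A).PosSemidef) (h2 : (η • A - (G - A)).PosSemidef) :
    (η • (G - A) - (G - A) * A⁻¹ * (G - A)).PosSemidef :=
  sandwich_ineq_general A G hA η h1 h2
end

section
/- For all real numbers α ≥ β > 0, one has α - ln β - 1 ≥ ω(√(αβ - 2β + 1)), where ω(t) = t - ln(1+t), provided αβ - 2β + 1 ≥ 0. -/
/-!
Put `s = √(αβ - 2β + 1)`, so that `s ≥ |β - 1|`, and compare `log β - log (1 + s)` with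
`α - 1 - s`. For `α ≥ 1` the tangent bound `log x ≤ x - 1` at `x = β / (1 + s)` suffices, since
`(α - s)(1 + s) - β = (α - 1)(1 + s - β) ≥ 0`. For `α ≤ 1` we have `β - 1 ≤ 0 ≤ s`, and the
second-order bounds `log (1 + t) ≤ t - t²/2` for `t ≤ 0` and `log (1 + t) ≥ t - t²/2` for `t ≥ 0`
reduce the claim to `(α - β)(1 - β/2) ≥ 0`.
-/

open Real

lemma hasDerivAt_sub_sq_div_two_sub_log_one_add {x : ℝ} (hx : -1 < x) :
    HasDerivAt (fun t : ℝ => t - t ^ 2 / 2 - log (1 + t)) (1 - x - (1 + x)⁻¹) x := by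
  have hlog : HasDerivAt (fun t : ℝ => log (1 + t)) (1 + x)⁻¹ x := by
    simpa using ((hasDerivAt_id x).const_add 1).log (by simp; linarith)
  have hpoly : HasDerivAt (fun t : ℝ => t - t ^ 2 / 2) (1 - x) x := by
    simpa using (hasDerivAt_id' x).fun_sub ((hasDerivAt_pow 2 x).div_const 2)
  exact hpoly.fun_sub hlog

lemma antitoneOn_sub_sq_div_two_sub_log_one_add :
    AntitoneOn (fun t : ℝ => t - t ^ 2 / 2 - log (1 + t)) (Set.Ioi (-1)) := by
  have hd := fun x (hx : x ∈ Set.Ioi (-1 : ℝ)) => hasDerivAt_sub_sq_div_two_sub_log_one_add hx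
  refine antitoneOn_of_deriv_nonpos (convex_Ioi _)
    (fun x hx => (hd x hx).continuousAt.continuousWithinAt) ?_ ?_ <;> rw [interior_Ioi]
  · exact fun x hx => (hd x hx).differentiableAt.differentiableWithinAt
  · intro x hx
    have hx1 : 0 < 1 + x := by linarith [Set.mem_Ioi.1 hx]
    rw [(hd x hx).deriv, sub_nonpos, ← one_div, le_div_iff₀ hx1]
    nlinarith [sq_nonneg x]

lemma sub_sq_div_two_le_log_one_add {t : ℝ} (ht : 0 ≤ t) : t - t ^ 2 / 2 ≤ log (1 + t) := by
  have := antitoneOn_sub_sq_div_two_sub_log_one_add (a := 0) (b := t)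
    (by norm_num) (Set.mem_Ioi.2 (by linarith)) ht
  norm_num at this
  linarith

lemma log_one_add_le_sub_sq_div_two {t : ℝ} (ht : -1 < t) (ht0 : t ≤ 0) :
    log (1 + t) ≤ t - t ^ 2 / 2 := by
  have := antitoneOn_sub_sq_div_two_sub_log_one_add (a := t) (b := 0)
    ht (by norm_num) ht0
  norm_num at this
  linarith

section

variable {α β s : ℝ} (hβ : 0 < β) (hαβ : β ≤ α) (hs : 0 ≤ s)
  (hsq : s ^ 2 = α * β - 2 * β + 1)
include hβ hαβ hs hsq

lemma omegaFn_le_of_one_le (hα : 1 ≤ α) : omegaFn s ≤ α - log β - 1 := by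
  have hs1 : 0 < 1 + s := by linarith
  have hβs : β - 1 ≤ s := by nlinarith [sq_nonneg (s - (β - 1)), sq_nonneg (s + (β - 1))]
  have hlog : log β - log (1 + s) ≤ β / (1 + s) - 1 := by
    rw [← log_div hβ.ne' hs1.ne']
    exact log_le_sub_one_of_pos (div_pos hβ hs1)
  have hratio : β / (1 + s) ≤ α - s := by
    rw [div_le_iff₀ hs1]
    nlinarith [mul_nonneg (sub_nonneg.2 hα) (by linarith : 0 ≤ 1 + s - β)]
  unfold omegaFn
  linarith

lemma omegaFn_le_of_le_one (hα : α ≤ 1) : omegaFn s ≤ α - log β - 1 := by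
  have hlogβ : log β ≤ (β - 1) - (β - 1) ^ 2 / 2 := by
    simpa using log_one_add_le_sub_sq_div_two (t := β - 1) (by linarith) (by linarith)
  have hlogs := sub_sq_div_two_le_log_one_add hs
  unfold omegaFn
  nlinarith [mul_nonneg (sub_nonneg.2 hαβ) (by linarith : 0 ≤ 1 - β / 2)]

end

theorem aux_omega_ineq (α β : ℝ) (hβ : 0 < β) (hαβ : β ≤ α) :
    α - Real.log β - 1 ≥ omegaFn (Real.sqrt (α * β - 2 * β + 1)) := by
  have hsq : √(α * β - 2 * β + 1) ^ 2 = α * β - 2 * β + 1 :=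
    sq_sqrt (by nlinarith [sq_nonneg (β - 1)])
  rcases le_total 1 α with hα | hα
  · exact omegaFn_le_of_one_le hβ hαβ (sqrt_nonneg _) hsq hα
  · exact omegaFn_le_of_le_one hβ hαβ (sqrt_nonneg _) hsq hα
end

section
/- For ω(t) = t - ln(1+t) and all t ≥ 0: t²/(2(1+t)) ≤ t²/(2(1 + 2t/3)) ≤ ω(t) ≤ t²/(2+t). -/
open Real Set

lemma hasDerivAt_omegaFn {x : ℝ} (hx : -1 < x) : HasDerivAt omegaFn (x / (1 + x)) x := by
  have hlog : HasDerivAt (fun t => log (1 + t)) (1 / (1 + x)) x := by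
    simpa using ((hasDerivAt_id' x).const_add 1).log (by linarith)
  refine ((hasDerivAt_id' x).sub hlog).congr_deriv ?_
  field_simp [show 1 + x ≠ 0 by linarith]
  ring

lemma hasDerivAt_sq_div_two_mul_one_add {x : ℝ} (hx : 3 + 2 * x ≠ 0) :
    HasDerivAt (fun t => t ^ 2 / (2 * (1 + 2 * t / 3))) (3 * x * (3 + x) / (3 + 2 * x) ^ 2) x := by
  have hden : HasDerivAt (fun t : ℝ => 2 * (1 + 2 * t / 3)) (2 * (2 * 1 / 3)) x :=
    ((((hasDerivAt_id' x).const_mul 2).div_const 3).const_add 1).const_mul 2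
  refine ((hasDerivAt_pow 2 x).div hden (by contrapose! hx; linarith)).congr_deriv ?_
  field_simp
  ring

lemma sq_div_two_mul_one_add_le_omegaFn {t : ℝ} (ht : 0 ≤ t) :
    t ^ 2 / (2 * (1 + 2 * t / 3)) ≤ omegaFn t := by
  set F := fun x => omegaFn x - x ^ 2 / (2 * (1 + 2 * x / 3))
  have hF : ∀ x ∈ Ici (0 : ℝ), HasDerivAt F (x ^ 3 / ((1 + x) * (3 + 2 * x) ^ 2)) x := by
    intro x (hx : 0 ≤ x)
    refine ((hasDerivAt_omegaFn (by linarith)).sub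
      (hasDerivAt_sq_div_two_mul_one_add (by positivity))).congr_deriv ?_
    field_simp
    ring
  have hmono : MonotoneOn F (Ici 0) :=
    monotoneOn_of_hasDerivWithinAt_nonneg (convex_Ici 0)
      (fun x hx => (hF x hx).continuousAt.continuousWithinAt)
      (fun x hx => (hF x (interior_subset hx)).hasDerivWithinAt)
      (fun x hx => by rw [interior_Ici] at hx; have : 0 < x := hx; positivity)
  simpa [F, omegaFn] using hmono self_mem_Ici ht ht

lemma omegaFn_le_sq_div_two_add {t : ℝ} (ht : 0 ≤ t) : omegaFn t ≤ t ^ 2 / (2 + t) := by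
  have hlog := le_log_one_add_of_nonneg ht
  have key : t ^ 2 / (2 + t) = t - 2 * t / (t + 2) := by
    field_simp
    ring
  rw [omegaFn, key]
  linarith

theorem omega_bounds (t : ℝ) (ht : 0 ≤ t) :
    t ^ 2 / (2 * (1 + t)) ≤ t ^ 2 / (2 * (1 + 2 * t / 3)) ∧
      t ^ 2 / (2 * (1 + 2 * t / 3)) ≤ omegaFn t ∧
      omegaFn t ≤ t ^ 2 / (2 + t) := by
  refine ⟨?_, sq_div_two_mul_one_add_le_omegaFn ht, omegaFn_le_sq_div_two_add ht⟩
  gcongr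
  linarith
end

section
/- Consider minimizing the quadratic f(x) = (1/2)xᵀAx - bᵀx with A symmetric positive definite, by the quasi-Newton iteration x_{k+1} = x_k - G_k⁻¹∇f(x_k), u_k = x_{k+1} - x_k, G_{k+1} = Broyd_{φ_k}(A, G_k, u_k) with arbitrary φ_k ∈ [0,1]. Then for every k ≥ 0, λ_f(x_{k+1}) = θ(A, G_k, u_k)·λ_f(x_k), where λ_f(x) = (∇f(x)ᵀ A⁻¹ ∇f(x))^{1/2} and θ(A,G,u) = [uᵀ(G-A)A⁻¹(G-A)u/(uᵀGA⁻¹Gu)]^{1/2}. -/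
open Matrix

/-- Gradient norm λ_f(x) = ‖∇f(x)‖_{A⁻¹} for the quadratic f(x) = ½xᵀAx - bᵀx. -/
noncomputable def lamQ {n : ℕ} (A : Matrix (Fin n) (Fin n) ℝ) (b x : Fin n → ℝ) : ℝ :=
  Real.sqrt ((A.mulVec x - b) ⬝ᵥ A⁻¹.mulVec (A.mulVec x - b))

/-!
The quasi-Newton step `u = -G⁻¹∇f(x)` satisfies `G u = -∇f(x)`, so for the quadratic the new
gradient is `∇f(x + u) = ∇f(x) + A u = -(G - A) u`. Hence `λ_f(x)` and `λ_f(x + u)` are the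
`A⁻¹`-norms of `G u` and `(G - A) u`, and by symmetry of `G` and `A` their ratio is `θ(A, G, u)`.
-/

section

variable {m : Type*} [Fintype m]

lemma dotProduct_transpose_mul_mul_mulVec (B M : Matrix m m ℝ) (u : m → ℝ) :
    u ⬝ᵥ (Bᵀ * M * B) *ᵥ u = (B *ᵥ u) ⬝ᵥ M *ᵥ (B *ᵥ u) := by
  rw [← mulVec_mulVec, ← mulVec_mulVec, dotProduct_mulVec, vecMul_transpose]

lemma mulVec_sub_eq_neg_of_eq_sub_inv_mulVec [DecidableEq m] {G : Matrix m m ℝ}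
    (hG : IsUnit G.det) {g x x' : m → ℝ} (hx' : x' = x - G⁻¹ *ᵥ g) : G *ᵥ (x' - x) = -g := by
  rw [hx', sub_sub_cancel_left, mulVec_neg, mulVec_mulVec, mul_nonsing_inv _ hG, one_mulVec]

lemma mulVec_sub_eq_neg_mulVec_sub {A G : Matrix m m ℝ} {b x x' : m → ℝ}
    (h : G *ᵥ (x' - x) = -(A *ᵥ x - b)) :
    A *ᵥ x' - b = -((G - A) *ᵥ (x' - x)) := by
  rw [sub_mulVec, h, mulVec_sub]
  abel

end

lemma theta_mul_sqrt {n : ℕ} {A G : Matrix (Fin n) (Fin n) ℝ} (hA : A.PosDef) (hG : G.PosDef)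
    (u : Fin n → ℝ) :
    theta A G u * √((G *ᵥ u) ⬝ᵥ A⁻¹ *ᵥ (G *ᵥ u)) =
      √(((G - A) *ᵥ u) ⬝ᵥ A⁻¹ *ᵥ ((G - A) *ᵥ u)) := by
  rcases eq_or_ne u 0 with rfl | hu
  · simp [theta]
  have hGsymm : Gᵀ = G := (isHermitian_iff_isSymm.mp hG.isHermitian).eq
  have hAsymm : Aᵀ = A := (isHermitian_iff_isSymm.mp hA.isHermitian).eq
  have hGu : G *ᵥ u ≠ 0 :=
    (mulVec_injective_iff_isUnit.2 hG.isUnit).ne_iff' (mulVec_zero G) |>.2 hu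
  have hden : 0 < (G *ᵥ u) ⬝ᵥ A⁻¹ *ᵥ (G *ᵥ u) := hA.inv.dotProduct_mulVec_pos hGu
  have hnum : 0 ≤ ((G - A) *ᵥ u) ⬝ᵥ A⁻¹ *ᵥ ((G - A) *ᵥ u) :=
    hA.inv.posSemidef.dotProduct_mulVec_nonneg _
  have hGAsymm : (G - A)ᵀ = G - A := by rw [transpose_sub, hGsymm, hAsymm]
  have hnum_eq := hGAsymm ▸ dotProduct_transpose_mul_mul_mulVec (G - A) A⁻¹ u
  have hden_eq := hGsymm ▸ dotProduct_transpose_mul_mul_mulVec G A⁻¹ u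
  rw [theta, if_neg hu, hnum_eq, hden_eq, Real.sqrt_div hnum,
    div_mul_cancel₀ _ (Real.sqrt_pos.2 hden).ne']

lemma lamQ_eq_of_sub_eq_neg {n : ℕ} {A : Matrix (Fin n) (Fin n) ℝ} {b x v : Fin n → ℝ}
    (h : A *ᵥ x - b = -v) : lamQ A b x = √(v ⬝ᵥ A⁻¹ *ᵥ v) := by
  rw [lamQ, h, mulVec_neg, neg_dotProduct_neg]

theorem quad_lambda_via_theta_general {n : ℕ} (A : Matrix (Fin n) (Fin n) ℝ) (hA : A.PosDef)
    (b : Fin n → ℝ) (x : ℕ → Fin n → ℝ) (G : ℕ → Matrix (Fin n) (Fin n) ℝ)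
    (hGpos : ∀ k, (G k).PosDef)
    (hstep : ∀ k, x (k + 1) = x k - (G k)⁻¹.mulVec (A.mulVec (x k) - b)) :
    ∀ k, lamQ A b (x (k + 1)) = theta A (G k) (x (k + 1) - x k) * lamQ A b (x k) := by
  intro k
  have hstep_dir : G k *ᵥ (x (k + 1) - x k) = -(A *ᵥ x k - b) :=
    mulVec_sub_eq_neg_of_eq_sub_inv_mulVec (isUnit_iff_ne_zero.2 (hGpos k).det_pos.ne') (hstep k)
  rw [lamQ_eq_of_sub_eq_neg (mulVec_sub_eq_neg_mulVec_sub hstep_dir),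
    lamQ_eq_of_sub_eq_neg (neg_eq_iff_eq_neg.1 hstep_dir.symm), theta_mul_sqrt hA (hGpos k)]

theorem quad_lambda_via_theta {n : ℕ} (A : Matrix (Fin n) (Fin n) ℝ) (hA : A.PosDef)
    (b : Fin n → ℝ) (x : ℕ → Fin n → ℝ) (G : ℕ → Matrix (Fin n) (Fin n) ℝ)
    (φ : ℕ → ℝ) (hφ : ∀ k, φ k ∈ Set.Icc (0 : ℝ) 1)
    (hGpos : ∀ k, (G k).PosDef)
    (hstep : ∀ k, x (k + 1) = x k - (G k)⁻¹.mulVec (A.mulVec (x k) - b))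
    (hupd : ∀ k, G (k + 1) = Broyd (φ k) A (G k) (x (k + 1) - x k)) :
    ∀ k, lamQ A b (x (k + 1)) = theta A (G k) (x (k + 1) - x k) * lamQ A b (x k) :=
  quad_lambda_via_theta_general A hA b x G hGpos hstep
end

section
/- In the quadratic quasi-Newton scheme with initialization G₀ = L·B where μB ⪯ A ⪯ LB, and updates G_{k+1} = Broyd_{φ_k}(A, G_k, u_k) with φ_k ∈ [0,1], one has A ⪯ G_k ⪯ (L/μ)A for all k ≥ 0, and consequently λ_f(x_k) ≤ (1 - μ/L)^k λ_f(x₀). -/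
open Matrix

/-!
The updates of the convex Broyden class are monotone in `G` for the Loewner order (DFP is affine in
`G` with linear part a congruence, BFGS subtracts the Schur-complement term `G u uᵀ G / uᵀGu`, which
is monotone as a pointwise minimum), they fix `A`, and they send `η A` to
`η A - (η - 1) A u uᵀ A / uᵀAu ≤ η A`. Hence the Loewner interval `[A, η A]` is invariant, and
`G₀ = L B` lies in it for `η = L / μ`.

For `G` in that interval the step `s = G⁻¹ ∇f(x)` leaves the gradient `∇f(x - s) = D s` with
`D = G - A`, and `λ_f(x)² = sᵀAs + 2 sᵀDs + λ_f(x - s)²`. From `0 ≤ D ≤ (η - 1) A` one gets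
`λ_f(x - s)² ≤ (η - 1) sᵀDs` and `sᵀDs ≤ (η - 1) sᵀAs`, which combine to
`λ_f(x - s) ≤ (1 - 1/η) λ_f(x)`.
-/

open scoped MatrixOrder

namespace Matrix

section LoewnerOrder

variable {ι : Type*} {M N : Matrix ι ι ℝ}

theorem IsHermitian.of_le (hM : M.IsHermitian) (h : M ≤ N) : N.IsHermitian := by
  simpa using (le_iff.1 h).isHermitian.add hM

theorem isHermitian_vecMulVec_add_vecMulVec (a b : ι → ℝ) :
    (vecMulVec a b + vecMulVec b a).IsHermitian := by
  simpa [conjTranspose_vecMulVec] using isHermitian_add_transpose_self (vecMulVec a b)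

variable [Fintype ι]

theorem dotProduct_mulVec_le_of_le (h : M ≤ N) (v : ι → ℝ) :
    v ⬝ᵥ M *ᵥ v ≤ v ⬝ᵥ N *ᵥ v := by
  simpa [sub_mulVec] using (le_iff.1 h).dotProduct_mulVec_nonneg v

theorem le_of_dotProduct_mulVec_le (hM : M.IsHermitian) (hN : N.IsHermitian)
    (h : ∀ v, v ⬝ᵥ M *ᵥ v ≤ v ⬝ᵥ N *ᵥ v) : M ≤ N :=
  le_iff.2 <| .of_dotProduct_mulVec_nonneg (hN.sub hM) fun v => by
    simpa [sub_mulVec] using h v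

theorem IsHermitian.dotProduct_mulVec_comm (hM : M.IsHermitian) (v w : ι → ℝ) :
    v ⬝ᵥ M *ᵥ w = w ⬝ᵥ M *ᵥ v := by
  rw [dotProduct_mulVec, ← mulVec_transpose, ← conjTranspose_eq_transpose_of_trivial, hM.eq,
    dotProduct_comm]

theorem IsHermitian.dotProduct_sub_smul_mulVec_sub_smul (hM : M.IsHermitian) (v u : ι → ℝ)
    (t : ℝ) : (v - t • u) ⬝ᵥ M *ᵥ (v - t • u)
      = v ⬝ᵥ M *ᵥ v - 2 * t * (v ⬝ᵥ M *ᵥ u) + t ^ 2 * (u ⬝ᵥ M *ᵥ u) := by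
  simp only [mulVec_sub, mulVec_smul, sub_dotProduct, dotProduct_sub, smul_dotProduct,
    dotProduct_smul, smul_eq_mul, hM.dotProduct_mulVec_comm u v]
  ring

theorem IsHermitian.dotProduct_mulVec_sub_sq_div_le (hM : M.IsHermitian) {u : ι → ℝ}
    (hu : 0 < u ⬝ᵥ M *ᵥ u) (v : ι → ℝ) (t : ℝ) :
    v ⬝ᵥ M *ᵥ v - (v ⬝ᵥ M *ᵥ u) ^ 2 / (u ⬝ᵥ M *ᵥ u) ≤ (v - t • u) ⬝ᵥ M *ᵥ (v - t • u) := by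
  have hsq : 0 ≤ (t * (u ⬝ᵥ M *ᵥ u) - v ⬝ᵥ M *ᵥ u) ^ 2 / (u ⬝ᵥ M *ᵥ u) := by positivity
  rw [hM.dotProduct_sub_smul_mulVec_sub_smul, ← sub_nonneg]
  convert hsq using 1
  field_simp
  ring

theorem IsHermitian.dotProduct_mulVec_sub_sq_div_eq (hM : M.IsHermitian) {u : ι → ℝ}
    (hu : u ⬝ᵥ M *ᵥ u ≠ 0) (v : ι → ℝ) :
    (v - ((v ⬝ᵥ M *ᵥ u) / (u ⬝ᵥ M *ᵥ u)) • u) ⬝ᵥ M *ᵥ (v - ((v ⬝ᵥ M *ᵥ u) / (u ⬝ᵥ M *ᵥ u)) • u)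
      = v ⬝ᵥ M *ᵥ v - (v ⬝ᵥ M *ᵥ u) ^ 2 / (u ⬝ᵥ M *ᵥ u) := by
  rw [hM.dotProduct_sub_smul_mulVec_sub_smul]
  field_simp
  ring

/-- The Schur-complement form `v ↦ vᵀMv - (vᵀMu)² / uᵀMu` is monotone in `M`: it is the minimum
of `(v - t u)ᵀ M (v - t u)` over `t`. -/
theorem dotProduct_mulVec_sub_sq_div_le_of_le (hM : M.IsHermitian) (h : M ≤ N) {u : ι → ℝ}
    (hu : 0 < u ⬝ᵥ M *ᵥ u) (v : ι → ℝ) :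
    v ⬝ᵥ M *ᵥ v - (v ⬝ᵥ M *ᵥ u) ^ 2 / (u ⬝ᵥ M *ᵥ u)
      ≤ v ⬝ᵥ N *ᵥ v - (v ⬝ᵥ N *ᵥ u) ^ 2 / (u ⬝ᵥ N *ᵥ u) := by
  have huN : 0 < u ⬝ᵥ N *ᵥ u := hu.trans_le (dotProduct_mulVec_le_of_le h u)
  rw [← (hM.of_le h).dotProduct_mulVec_sub_sq_div_eq huN.ne']
  exact (hM.dotProduct_mulVec_sub_sq_div_le hu v _).trans (dotProduct_mulVec_le_of_le h _)

theorem isHermitian_vecMulVec_self (a : ι → ℝ) : (vecMulVec a a).IsHermitian := by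
  simpa using (posSemidef_vecMulVec_self_star a).isHermitian

theorem dotProduct_vecMulVec_mulVec (a b v : ι → ℝ) :
    v ⬝ᵥ vecMulVec a b *ᵥ v = (v ⬝ᵥ a) * (v ⬝ᵥ b) := by
  simp [vecMulVec_mulVec, dotProduct_comm b v, mul_comm]

end LoewnerOrder

end Matrix

section QuasiNewtonUpdates

variable {n : ℕ} {A G G₁ G₂ : Matrix (Fin n) (Fin n) ℝ} {u : Fin n → ℝ} {φ c : ℝ}

theorem Matrix.IsHermitian.DFPupd (hG : G.IsHermitian) : (DFPupd A G u).IsHermitian :=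
  (hG.sub ((isHermitian_vecMulVec_add_vecMulVec _ _).smul (.all _))).add
    ((isHermitian_vecMulVec_self _).smul (.all _))

theorem Matrix.IsHermitian.BFGSupd (hG : G.IsHermitian) : (BFGSupd A G u).IsHermitian :=
  (hG.sub ((isHermitian_vecMulVec_self _).smul (.all _))).add
    ((isHermitian_vecMulVec_self _).smul (.all _))

/-- The DFP update is `Pᵀ G P + A u uᵀ A / uᵀAu`, where `P v = v - (vᵀAu / uᵀAu) u` is the
`A`-orthogonal projection along `u`. -/
theorem dotProduct_DFPupd_mulVec (hG : G.IsHermitian) (hu : u ⬝ᵥ A *ᵥ u ≠ 0) (v : Fin n → ℝ) :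
    v ⬝ᵥ DFPupd A G u *ᵥ v
      = (v - ((v ⬝ᵥ A *ᵥ u) / (u ⬝ᵥ A *ᵥ u)) • u) ⬝ᵥ G *ᵥ (v - ((v ⬝ᵥ A *ᵥ u) / (u ⬝ᵥ A *ᵥ u)) • u)
        + (v ⬝ᵥ A *ᵥ u) ^ 2 / (u ⬝ᵥ A *ᵥ u) := by
  simp only [DFPupd, sub_mulVec, add_mulVec, smul_mulVec, dotProduct_sub, dotProduct_add,
    dotProduct_smul, dotProduct_vecMulVec_mulVec, hG.dotProduct_sub_smul_mulVec_sub_smul,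
    smul_eq_mul]
  field_simp
  ring

theorem dotProduct_BFGSupd_mulVec (v : Fin n → ℝ) :
    v ⬝ᵥ BFGSupd A G u *ᵥ v
      = v ⬝ᵥ G *ᵥ v - (v ⬝ᵥ G *ᵥ u) ^ 2 / (u ⬝ᵥ G *ᵥ u) + (v ⬝ᵥ A *ᵥ u) ^ 2 / (u ⬝ᵥ A *ᵥ u) := by
  simp only [BFGSupd, sub_mulVec, add_mulVec, smul_mulVec, dotProduct_sub, dotProduct_add,
    dotProduct_smul, dotProduct_vecMulVec_mulVec, smul_eq_mul]
  ring

theorem DFPupd_le_DFPupd (hG₁ : G₁.IsHermitian) (h : G₁ ≤ G₂) (hu : u ⬝ᵥ A *ᵥ u ≠ 0) :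
    DFPupd A G₁ u ≤ DFPupd A G₂ u :=
  le_of_dotProduct_mulVec_le hG₁.DFPupd (hG₁.of_le h).DFPupd fun v => by
    rw [dotProduct_DFPupd_mulVec hG₁ hu, dotProduct_DFPupd_mulVec (hG₁.of_le h) hu]
    gcongr
    exact dotProduct_mulVec_le_of_le h _

theorem BFGSupd_le_BFGSupd (hG₁ : G₁.IsHermitian) (h : G₁ ≤ G₂) (hu : 0 < u ⬝ᵥ G₁ *ᵥ u) :
    BFGSupd A G₁ u ≤ BFGSupd A G₂ u :=
  le_of_dotProduct_mulVec_le hG₁.BFGSupd (hG₁.of_le h).BFGSupd fun v => by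
    rw [dotProduct_BFGSupd_mulVec, dotProduct_BFGSupd_mulVec]
    exact add_le_add_left (dotProduct_mulVec_sub_sq_div_le_of_le hG₁ h hu v) _

theorem DFPupd_smul_self (hu : u ⬝ᵥ A *ᵥ u ≠ 0) (c : ℝ) :
    DFPupd A (c • A) u
      = c • A - ((c - 1) / (u ⬝ᵥ A *ᵥ u)) • vecMulVec (A *ᵥ u) (A *ᵥ u) := by
  simp only [DFPupd, smul_mulVec, dotProduct_smul, smul_eq_mul, vecMulVec_smul, smul_vecMulVec]
  field_simp
  module

theorem BFGSupd_smul_self (hu : u ⬝ᵥ A *ᵥ u ≠ 0) (hc : c ≠ 0) :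
    BFGSupd A (c • A) u
      = c • A - ((c - 1) / (u ⬝ᵥ A *ᵥ u)) • vecMulVec (A *ᵥ u) (A *ᵥ u) := by
  simp only [BFGSupd, smul_mulVec, dotProduct_smul, smul_eq_mul, vecMulVec_smul, smul_vecMulVec]
  match_scalars <;> field_simp
  ring

theorem Broyd_smul_self (hA : A.PosDef) (hc : c ≠ 0) (φ : ℝ) (u : Fin n → ℝ) :
    Broyd φ A (c • A) u
      = c • A - ((c - 1) / (u ⬝ᵥ A *ᵥ u)) • vecMulVec (A *ᵥ u) (A *ᵥ u) := by
  by_cases hu : u = 0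
  · simp [Broyd, hu]
  have hAu : u ⬝ᵥ A *ᵥ u ≠ 0 := by simpa using (hA.dotProduct_mulVec_pos hu).ne'
  rw [Broyd, if_neg hu, DFPupd_smul_self hAu, BFGSupd_smul_self hAu hc]
  module

theorem Broyd_self (hA : A.PosDef) (φ : ℝ) (u : Fin n → ℝ) : Broyd φ A A u = A := by
  simpa using Broyd_smul_self hA one_ne_zero φ u

theorem Broyd_smul_self_le (hA : A.PosDef) (hc : 1 ≤ c) (φ : ℝ) (u : Fin n → ℝ) :
    Broyd φ A (c • A) u ≤ c • A := by
  rw [Broyd_smul_self hA (by positivity) φ u, sub_le_self_iff]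
  have hAu : 0 ≤ u ⬝ᵥ A *ᵥ u := by simpa using hA.posSemidef.dotProduct_mulVec_nonneg u
  exact smul_nonneg (div_nonneg (sub_nonneg.2 hc) hAu)
    (by simpa using (posSemidef_vecMulVec_self_star (A *ᵥ u)).nonneg)

theorem Broyd_le_Broyd (hA : A.PosDef) (hG₁ : G₁.PosDef) (h : G₁ ≤ G₂)
    (hφ : φ ∈ Set.Icc (0 : ℝ) 1) (u : Fin n → ℝ) : Broyd φ A G₁ u ≤ Broyd φ A G₂ u := by
  by_cases hu : u = 0
  · simpa [Broyd, hu] using h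
  have hG₁u : 0 < u ⬝ᵥ G₁ *ᵥ u := by simpa using hG₁.dotProduct_mulVec_pos hu
  have hAu : u ⬝ᵥ A *ᵥ u ≠ 0 := by simpa using (hA.dotProduct_mulVec_pos hu).ne'
  simp only [Broyd, if_neg hu]
  gcongr
  · exact hφ.1
  · exact DFPupd_le_DFPupd hG₁.isHermitian h hAu
  · exact sub_nonneg.2 hφ.2
  · exact BFGSupd_le_BFGSupd hG₁.isHermitian h hG₁u

theorem Broyd_mem_Icc (hA : A.PosDef) {η : ℝ} (hη : 1 ≤ η) (hG : G ∈ Set.Icc A (η • A))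
    (hφ : φ ∈ Set.Icc (0 : ℝ) 1) (u : Fin n → ℝ) : Broyd φ A G u ∈ Set.Icc A (η • A) := by
  have hGpd : G.PosDef := by simpa using hA.add_posSemidef (le_iff.1 hG.1)
  constructor
  · calc A = Broyd φ A A u := (Broyd_self hA φ u).symm
      _ ≤ Broyd φ A G u := Broyd_le_Broyd hA hA hG.1 hφ u
  · calc Broyd φ A G u ≤ Broyd φ A (η • A) u := Broyd_le_Broyd hA hGpd hG.2 hφ u
      _ ≤ η • A := Broyd_smul_self_le hA hη φ u

end QuasiNewtonUpdates

namespace Matrix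

variable {ι : Type*} [Fintype ι] [DecidableEq ι] {A D : Matrix ι ι ℝ}

theorem PosDef.mulVec_inv_mulVec (hA : A.PosDef) (v : ι → ℝ) : A *ᵥ (A⁻¹ *ᵥ v) = v := by
  rw [mulVec_mulVec, mul_nonsing_inv _ ((isUnit_iff_isUnit_det _).1 hA.isUnit), one_mulVec]

theorem PosDef.dotProduct_inv_mulVec_add (hA : A.PosDef) (s d : ι → ℝ) :
    (A *ᵥ s + d) ⬝ᵥ A⁻¹ *ᵥ (A *ᵥ s + d) = s ⬝ᵥ A *ᵥ s + 2 * (s ⬝ᵥ d) + d ⬝ᵥ A⁻¹ *ᵥ d := by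
  have hs : A⁻¹ *ᵥ (A *ᵥ s) = s := by
    rw [mulVec_mulVec, nonsing_inv_mul _ ((isUnit_iff_isUnit_det _).1 hA.isUnit), one_mulVec]
  rw [mulVec_add, hs, add_dotProduct, dotProduct_add, dotProduct_add, dotProduct_comm (A *ᵥ s),
    dotProduct_comm (A *ᵥ s), hA.isHermitian.dotProduct_mulVec_comm (A⁻¹ *ᵥ d),
    hA.mulVec_inv_mulVec, dotProduct_comm d s]
  ring

theorem dotProduct_inv_mulVec_le_of_le (hA : A.PosDef) (hD : 0 ≤ D) {c : ℝ} (hc : 0 ≤ c)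
    (hDA : D ≤ c • A) (s : ι → ℝ) : D *ᵥ s ⬝ᵥ A⁻¹ *ᵥ (D *ᵥ s) ≤ c * (s ⬝ᵥ D *ᵥ s) := by
  set w := A⁻¹ *ᵥ (D *ᵥ s)
  set S := D *ᵥ s ⬝ᵥ w
  have hDH : D.IsHermitian := hD.posSemidef.isHermitian
  have hS : S = w ⬝ᵥ A *ᵥ w := by rw [hA.mulVec_inv_mulVec, dotProduct_comm]
  have hS0 : 0 ≤ S := by simpa [hS] using hA.posSemidef.dotProduct_mulVec_nonneg w
  have hq : 0 ≤ s ⬝ᵥ D *ᵥ s := by simpa using dotProduct_mulVec_le_of_le hD s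
  have hsDw : s ⬝ᵥ D *ᵥ w = S := by rw [hDH.dotProduct_mulVec_comm, dotProduct_comm]
  have hwDw : w ⬝ᵥ D *ᵥ w ≤ c * S := by
    simpa [smul_mulVec, hS] using dotProduct_mulVec_le_of_le hDA w
  -- Cauchy–Schwarz for the form of `D` on `s` and `w`, through the discriminant
  have hquad : ∀ t, 0 ≤ (c * S) * (t * t) + (-2 * S) * t + s ⬝ᵥ D *ᵥ s := fun t => by
    have h := dotProduct_mulVec_le_of_le hD (s - t • w)
    rw [hDH.dotProduct_sub_smul_mulVec_sub_smul, hsDw] at h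
    simp only [zero_mulVec, dotProduct_zero] at h
    nlinarith [mul_le_mul_of_nonneg_left hwDw (sq_nonneg t)]
  have hdisc := discrim_le_zero hquad
  rw [discrim] at hdisc
  nlinarith [mul_nonneg hc hq]

end Matrix

theorem lamQ_sub_inv_mulVec_le {n : ℕ} {A G : Matrix (Fin n) (Fin n) ℝ} (hA : A.PosDef) {η : ℝ}
    (hη : 1 ≤ η) (hG : G ∈ Set.Icc A (η • A)) (b x : Fin n → ℝ) :
    lamQ A b (x - G⁻¹ *ᵥ (A *ᵥ x - b)) ≤ (1 - 1 / η) * lamQ A b x := by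
  have hGpd : G.PosDef := by simpa using hA.add_posSemidef (le_iff.1 hG.1)
  set s := G⁻¹ *ᵥ (A *ᵥ x - b)
  have hgrad : A *ᵥ x - b = A *ᵥ s + (G - A) *ᵥ s := by
    rw [← add_mulVec, add_sub_cancel, hGpd.mulVec_inv_mulVec]
  have hgrad' : A *ᵥ (x - s) - b = (G - A) *ᵥ s := by
    rw [mulVec_sub, sub_right_comm, hgrad, add_sub_cancel_left]
  have hDA : G - A ≤ (η - 1) • A := by
    rw [sub_smul, one_smul]
    exact sub_le_sub_right hG.2 A
  have hS := dotProduct_inv_mulVec_le_of_le hA (sub_nonneg.2 hG.1) (by linarith) hDA s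
  have hq : s ⬝ᵥ (G - A) *ᵥ s ≤ (η - 1) * (s ⬝ᵥ A *ᵥ s) := by
    simpa [smul_mulVec] using dotProduct_mulVec_le_of_le hDA s
  have hp : 0 ≤ s ⬝ᵥ A *ᵥ s := by simpa using hA.posSemidef.dotProduct_mulVec_nonneg s
  have hS0 : 0 ≤ (G - A) *ᵥ s ⬝ᵥ A⁻¹ *ᵥ ((G - A) *ᵥ s) := by
    simpa using hA.inv.posSemidef.dotProduct_mulVec_nonneg ((G - A) *ᵥ s)
  have hη0 : 0 < η := by linarith
  rw [lamQ, lamQ, hgrad', hgrad, hA.dotProduct_inv_mulVec_add,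
    ← Real.sqrt_sq (show 0 ≤ 1 - 1 / η by rw [sub_nonneg, div_le_one hη0]; exact hη),
    ← Real.sqrt_mul (sq_nonneg _)]
  apply Real.sqrt_le_sqrt
  rw [one_sub_div hη0.ne', div_pow, div_mul_eq_mul_div, le_div_iff₀ (by positivity)]
  nlinarith [mul_le_mul_of_nonneg_left hS (show 0 ≤ 2 * η - 1 by linarith),
    mul_le_mul_of_nonneg_left hq (show 0 ≤ η - 1 by linarith)]

theorem quad_linear_convergence_general {n : ℕ} (A B : Matrix (Fin n) (Fin n) ℝ)
    (hA : A.PosDef) (μ L : ℝ) (hμ : 0 < μ) (hμL : μ ≤ L)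
    (hml : (A - μ • B).PosSemidef) (hmu : (L • B - A).PosSemidef)
    (b : Fin n → ℝ) (x : ℕ → Fin n → ℝ) (G : ℕ → Matrix (Fin n) (Fin n) ℝ)
    (φ : ℕ → ℝ) (hφ : ∀ k, φ k ∈ Set.Icc (0 : ℝ) 1)
    (hG0 : G 0 = L • B)
    (hstep : ∀ k, x (k + 1) = x k - (G k)⁻¹.mulVec (A.mulVec (x k) - b))
    (hupd : ∀ k, G (k + 1) = Broyd (φ k) A (G k) (x (k + 1) - x k)) :
    ∀ k, (G k - A).PosSemidef ∧ ((L / μ) • A - G k).PosSemidef ∧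
      lamQ A b (x k) ≤ (1 - μ / L) ^ k * lamQ A b (x 0) := by
  have hη : 1 ≤ L / μ := (one_le_div hμ).2 hμL
  have hG : ∀ k, G k ∈ Set.Icc A ((L / μ) • A) := by
    intro k
    induction k with
    | zero =>
      refine ⟨hG0 ▸ hmu, hG0 ▸ ?_⟩
      have h := smul_le_smul_of_nonneg_left (le_iff.2 hml) (div_nonneg (hμ.le.trans hμL) hμ.le)
      rwa [smul_smul, div_mul_cancel₀ _ hμ.ne'] at h
    | succ k ih => exact hupd k ▸ Broyd_mem_Icc hA hη ih (hφ k) _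
  intro k
  refine ⟨(hG k).1, (hG k).2, ?_⟩
  induction k with
  | zero => simp
  | succ k ih =>
    have hstep' := lamQ_sub_inv_mulVec_le hA hη (hG k) b (x k)
    rw [one_div_div, ← hstep k] at hstep'
    calc lamQ A b (x (k + 1)) ≤ (1 - μ / L) * lamQ A b (x k) := hstep'
      _ ≤ (1 - μ / L) * ((1 - μ / L) ^ k * lamQ A b (x 0)) := by
        gcongr
        rw [sub_nonneg, div_le_one (hμ.trans_le hμL)]
        exact hμL
      _ = (1 - μ / L) ^ (k + 1) * lamQ A b (x 0) := by ring

theorem quad_linear_convergence {n : ℕ} (A B : Matrix (Fin n) (Fin n) ℝ)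
    (hA : A.PosDef) (hB : B.PosDef) (μ L : ℝ) (hμ : 0 < μ) (hμL : μ ≤ L)
    (hml : (A - μ • B).PosSemidef) (hmu : (L • B - A).PosSemidef)
    (b : Fin n → ℝ) (x : ℕ → Fin n → ℝ) (G : ℕ → Matrix (Fin n) (Fin n) ℝ)
    (φ : ℕ → ℝ) (hφ : ∀ k, φ k ∈ Set.Icc (0 : ℝ) 1)
    (hG0 : G 0 = L • B)
    (hstep : ∀ k, x (k + 1) = x k - (G k)⁻¹.mulVec (A.mulVec (x k) - b))
    (hupd : ∀ k, G (k + 1) = Broyd (φ k) A (G k) (x (k + 1) - x k)) :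
    ∀ k, (G k - A).PosSemidef ∧ ((L / μ) • A - G k).PosSemidef ∧
      lamQ A b (x k) ≤ (1 - μ / L) ^ k * lamQ A b (x 0) :=
  quad_linear_convergence_general A B hA μ L hμ hμL hml hmu b x G φ hφ hG0 hstep hupd
end

section
/- Let f be strongly self-concordant with constant M ≥ 0, i.e., ∇²f(y) - ∇²f(x) ⪯ M‖y-x‖_z ∇²f(w) for all x,y,z,w, where ‖h‖_z = ⟨∇²f(z)h,h⟩^{1/2}. Then for any x, y with r = ‖y-x‖_x: (a) ∇²f(x)/(1+Mr) ⪯ ∇²f(y) ⪯ (1+Mr)∇²f(x); (b) for J = ∫₀¹ ∇²f(x + t(y-x))dt, one has ∇²f(x)/(1+Mr/2) ⪯ J ⪯ (1+Mr/2)∇²f(x) and ∇²f(y)/(1+Mr/2) ⪯ J ⪯ (1+Mr/2)∇²f(y). -/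
open Matrix

/-- Gradient of f as a vector. -/
noncomputable def gradV {n : ℕ} (f : (Fin n → ℝ) → ℝ) (x : Fin n → ℝ) : Fin n → ℝ :=
  fun i => fderiv ℝ f x (Pi.single i 1)

/-- Hessian of f as a matrix. -/
noncomputable def hessM {n : ℕ} (f : (Fin n → ℝ) → ℝ) (x : Fin n → ℝ) :
    Matrix (Fin n) (Fin n) ℝ :=
  Matrix.of fun i j =>
    fderiv ℝ (fun y => fderiv ℝ f y (Pi.single j 1)) x (Pi.single i 1)

/-- Averaged Hessian of f along the segment from x to y. -/
noncomputable def avgHess {n : ℕ} (f : (Fin n → ℝ) → ℝ) (x y : Fin n → ℝ) :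
    Matrix (Fin n) (Fin n) ℝ :=
  Matrix.of fun i j => ∫ t in (0 : ℝ)..1, hessM f (x + t • (y - x)) i j

/-- Strong self-concordance of f with constant M. -/
def StronglySelfConcordant {n : ℕ} (f : (Fin n → ℝ) → ℝ) (M : ℝ) : Prop :=
  ∀ x y z w : Fin n → ℝ,
    ((M * Real.sqrt ((y - x) ⬝ᵥ (hessM f z).mulVec (y - x))) • hessM f w -
      (hessM f y - hessM f x)).PosSemidef

/-- Local gradient norm λ_f(x) = ‖∇f(x)‖ₓ*. -/
noncomputable def lamF {n : ℕ} (f : (Fin n → ℝ) → ℝ) (x : Fin n → ℝ) : ℝ :=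
  Real.sqrt (gradV f x ⬝ᵥ (hessM f x)⁻¹.mulVec (gradV f x))

/-! The defining inequality with `w = p` compares the Hessians at any two points `p`, `q`:
`∇²f(q) ⪯ (1 + M‖q - p‖_z) ∇²f(p)`. Along the segment `x_t = x + t(y - x)` this gives
`∇²f(x_t) ⪯ (1 + Mrt) ∇²f(x)` and `∇²f(x) ⪯ (1 + Mrt) ∇²f(x_t)`; part (a) is the case `t = 1`.
Integrating over `t ∈ [0, 1]` gives the upper bound on `J`, and the lower bound comes from the
tangent line of the convex function `t ↦ 1 / (1 + Mrt)` at `t = 1/2`, whose integral is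
`1 / (1 + Mr/2)`. Since `J` is symmetric in `x` and `y` and the norm may be taken at any fixed
point `z`, the bounds relative to `∇²f(y)` follow by exchanging `x` and `y`. -/

section Scalar

lemma integral_const_add_mul_zero_one (α β : ℝ) : ∫ t in (0 : ℝ)..1, (α + β * t) = α + β / 2 := by
  rw [intervalIntegral.integral_add intervalIntegrable_const
      ((continuous_const_mul β).intervalIntegrable 0 1),
    intervalIntegral.integral_const, intervalIntegral.integral_const_mul, integral_id]
  ring

variable {g : ℝ → ℝ} {a c : ℝ}

lemma integral_le_of_le_one_add_mul (hg : IntervalIntegrable g MeasureTheory.volume 0 1)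
    (h : ∀ t ∈ Set.Icc (0 : ℝ) 1, g t ≤ (1 + a * t) * c) :
    ∫ t in (0 : ℝ)..1, g t ≤ (1 + a / 2) * c := by
  have hmono := intervalIntegral.integral_mono_on zero_le_one hg
    ((continuous_const.add (continuous_const_mul _)).intervalIntegrable 0 1)
    (g := fun t => c + a * c * t) fun t ht => by linarith [h t ht]
  rw [integral_const_add_mul_zero_one] at hmono
  linarith

lemma le_integral_of_le_one_add_mul (hg : IntervalIntegrable g MeasureTheory.volume 0 1)
    (ha : 0 ≤ a) (hc : 0 ≤ c) (h : ∀ t ∈ Set.Icc (0 : ℝ) 1, c ≤ (1 + a * t) * g t) :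
    c ≤ (1 + a / 2) * ∫ t in (0 : ℝ)..1, g t := by
  set m := 1 + a / 2 with hm_def
  have hm : 0 < m := by positivity
  -- `m² / s ≥ 2m - s` for `s > 0`: the tangent line of `s ↦ 1 / s` at `s = m`.
  have htangent : ∀ t ∈ Set.Icc (0 : ℝ) 1, c * (2 * m - 1) + (-(a * c)) * t ≤ m ^ 2 * g t := by
    intro t ht
    have hs : 0 < 1 + a * t := by nlinarith [ht.1]
    have hsq := mul_nonneg hc (sq_nonneg (m - (1 + a * t)))
    refine le_of_mul_le_mul_left ?_ hs
    nlinarith [h t ht]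
  have hmono := intervalIntegral.integral_mono_on zero_le_one
    ((continuous_const.add (continuous_const_mul _)).intervalIntegrable 0 1)
    (hg.const_mul (m ^ 2)) (f := fun t => c * (2 * m - 1) + -(a * c) * t) htangent
  have hmean : c * (2 * m - 1) + -(a * c) / 2 = m * c := by rw [hm_def]; ring
  rw [integral_const_add_mul_zero_one, intervalIntegral.integral_const_mul, hmean] at hmono
  refine le_of_mul_le_mul_left ?_ hm
  linarith [mul_assoc m m (∫ t in (0 : ℝ)..1, g t)]

end Scalar

section Matrices

variable {ι : Type*} [Fintype ι]

lemma posSemidef_sub_of_dotProduct_mulVec_le {A B : Matrix ι ι ℝ} (hA : A.IsHermitian)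
    (hB : B.IsHermitian) (h : ∀ u, u ⬝ᵥ B *ᵥ u ≤ u ⬝ᵥ A *ᵥ u) : (A - B).PosSemidef :=
  .of_dotProduct_mulVec_nonneg (hA.sub hB) fun u => by
    simpa [sub_mulVec, dotProduct_sub] using h u

lemma posSemidef_smul_sub_of_dotProduct_mulVec_le {A B : Matrix ι ι ℝ} {c : ℝ}
    (hA : A.IsHermitian) (hB : B.IsHermitian) (h : ∀ u, u ⬝ᵥ B *ᵥ u ≤ c * (u ⬝ᵥ A *ᵥ u)) :
    (c • A - B).PosSemidef :=
  posSemidef_sub_of_dotProduct_mulVec_le (hA.smul (IsSelfAdjoint.all c)) hB fun u => by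
    simpa [smul_mulVec] using h u

lemma posSemidef_sub_smul_of_dotProduct_mulVec_le {A B : Matrix ι ι ℝ} {c : ℝ}
    (hA : A.IsHermitian) (hB : B.IsHermitian) (h : ∀ u, c * (u ⬝ᵥ A *ᵥ u) ≤ u ⬝ᵥ B *ᵥ u) :
    (B - c • A).PosSemidef :=
  posSemidef_sub_of_dotProduct_mulVec_le hB (hA.smul (IsSelfAdjoint.all c)) fun u => by
    simpa [smul_mulVec] using h u

end Matrices

section Hessian

variable {n : ℕ} {f : (Fin n → ℝ) → ℝ}

noncomputable def hessNorm (f : (Fin n → ℝ) → ℝ) (z h : Fin n → ℝ) : ℝ :=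
  Real.sqrt (h ⬝ᵥ hessM f z *ᵥ h)

lemma hessNorm_smul (z h : Fin n → ℝ) (c : ℝ) :
    hessNorm f z (c • h) = |c| * hessNorm f z h := by
  have hquad : (c • h) ⬝ᵥ hessM f z *ᵥ (c • h) = c ^ 2 * (h ⬝ᵥ hessM f z *ᵥ h) := by
    rw [smul_dotProduct, mulVec_smul, dotProduct_smul, smul_eq_mul, smul_eq_mul]
    ring
  rw [hessNorm, hquad, Real.sqrt_mul (sq_nonneg c), Real.sqrt_sq_eq_abs, hessNorm]

lemma hessNorm_nonneg (z h : Fin n → ℝ) : 0 ≤ hessNorm f z h := Real.sqrt_nonneg _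

lemma hessNorm_sub_comm (z x y : Fin n → ℝ) : hessNorm f z (x - y) = hessNorm f z (y - x) := by
  rw [← neg_sub, ← neg_one_smul ℝ (y - x), hessNorm_smul, abs_neg, abs_one, one_mul]

lemma continuous_hessM (hf : ContDiff ℝ 2 f) : Continuous (hessM f) := by
  refine continuous_matrix fun i j => ?_
  have hpartial : ContDiff ℝ 1 fun y => fderiv ℝ f y (Pi.single j 1) :=
    (hf.fderiv_right (m := 1) (by norm_num)).clm_apply contDiff_const
  exact (hpartial.continuous_fderiv one_ne_zero).clm_apply continuous_const

lemma continuous_hessM_segment (hf : ContDiff ℝ 2 f) (x y : Fin n → ℝ) :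
    Continuous fun t : ℝ => hessM f (x + t • (y - x)) :=
  (continuous_hessM hf).comp (by fun_prop)

lemma intervalIntegrable_dotProduct_mulVec_hessM_segment (hf : ContDiff ℝ 2 f)
    (x y u : Fin n → ℝ) :
    IntervalIntegrable (fun t : ℝ => u ⬝ᵥ hessM f (x + t • (y - x)) *ᵥ u)
      MeasureTheory.volume 0 1 :=
  (continuous_const.dotProduct ((continuous_hessM_segment hf x y).matrix_mulVec
    continuous_const)).intervalIntegrable 0 1

lemma avgHess_comm (x y : Fin n → ℝ) : avgHess f x y = avgHess f y x := by
  ext i j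
  have hseg : ∀ t : ℝ, y + (1 - t) • (x - y) = x + t • (y - x) := fun t => by module
  simp only [avgHess, of_apply, ← hseg]
  simpa using (intervalIntegral.integral_comp_sub_left
    (fun t => hessM f (y + t • (x - y)) i j) (1 : ℝ) (a := 0) (b := 1))

lemma avgHess_isHermitian (hsym : ∀ z, (hessM f z).IsHermitian) (x y : Fin n → ℝ) :
    (avgHess f x y).IsHermitian :=
  IsHermitian.ext fun i j => by
    simp only [avgHess, of_apply, star_trivial]
    exact intervalIntegral.integral_congr fun t _ => by simpa using (hsym _).apply i j

lemma dotProduct_mulVec_avgHess (hf : ContDiff ℝ 2 f) (x y u : Fin n → ℝ) :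
    u ⬝ᵥ avgHess f x y *ᵥ u = ∫ t in (0 : ℝ)..1, u ⬝ᵥ hessM f (x + t • (y - x)) *ᵥ u := by
  have hentry : ∀ i j, Continuous fun t : ℝ => hessM f (x + t • (y - x)) i j := fun i j =>
    (continuous_apply_apply i j).comp (continuous_hessM_segment hf x y)
  have hterm : ∀ i j, Continuous fun t : ℝ => u i * (hessM f (x + t • (y - x)) i j * u j) :=
    fun i j => continuous_const.mul ((hentry i j).mul continuous_const)
  simp only [dotProduct, mulVec, avgHess, of_apply, Finset.mul_sum]
  rw [intervalIntegral.integral_finsetSum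
    (f := fun i t => ∑ j, u i * (hessM f (x + t • (y - x)) i j * u j)) fun i _ =>
      (continuous_finsetSum _ fun j _ => hterm i j).intervalIntegrable 0 1]
  refine Finset.sum_congr rfl fun i _ => ?_
  rw [intervalIntegral.integral_finsetSum fun j _ => (hterm i j).intervalIntegrable 0 1]
  refine Finset.sum_congr rfl fun j _ => ?_
  rw [intervalIntegral.integral_const_mul, intervalIntegral.integral_mul_const]

end Hessian

namespace StronglySelfConcordant

variable {n : ℕ} {f : (Fin n → ℝ) → ℝ} {M : ℝ}

lemma dotProduct_mulVec_le (hssc : StronglySelfConcordant f M) (z p q u : Fin n → ℝ) :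
    u ⬝ᵥ hessM f q *ᵥ u ≤ (1 + M * hessNorm f z (q - p)) * (u ⬝ᵥ hessM f p *ᵥ u) := by
  have h := (hssc p q z p).dotProduct_mulVec_nonneg u
  simp only [sub_mulVec, smul_mulVec, dotProduct_sub, dotProduct_smul, smul_eq_mul,
    star_trivial] at h
  rw [hessNorm]
  linarith

lemma dotProduct_mulVec_segment_le (hssc : StronglySelfConcordant f M) (z x y u : Fin n → ℝ)
    {t : ℝ} (ht : 0 ≤ t) :
    u ⬝ᵥ hessM f (x + t • (y - x)) *ᵥ u
      ≤ (1 + M * hessNorm f z (y - x) * t) * (u ⬝ᵥ hessM f x *ᵥ u) := by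
  have h := hssc.dotProduct_mulVec_le z x (x + t • (y - x)) u
  rwa [add_sub_cancel_left, hessNorm_smul, abs_of_nonneg ht, mul_left_comm, mul_comm t] at h

lemma dotProduct_mulVec_le_segment (hssc : StronglySelfConcordant f M) (z x y u : Fin n → ℝ)
    {t : ℝ} (ht : 0 ≤ t) :
    u ⬝ᵥ hessM f x *ᵥ u
      ≤ (1 + M * hessNorm f z (y - x) * t) * (u ⬝ᵥ hessM f (x + t • (y - x)) *ᵥ u) := by
  have h := hssc.dotProduct_mulVec_le z (x + t • (y - x)) x u
  rwa [hessNorm_sub_comm, add_sub_cancel_left, hessNorm_smul, abs_of_nonneg ht,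
    mul_left_comm, mul_comm t] at h

theorem smul_hessM_sub_hessM_posSemidef (hssc : StronglySelfConcordant f M)
    (hsym : ∀ z, (hessM f z).IsHermitian) (z x y : Fin n → ℝ) :
    ((1 + M * hessNorm f z (y - x)) • hessM f x - hessM f y).PosSemidef :=
  posSemidef_smul_sub_of_dotProduct_mulVec_le (hsym x) (hsym y) (hssc.dotProduct_mulVec_le z x y)

theorem hessM_sub_smul_hessM_posSemidef (hssc : StronglySelfConcordant f M)
    (hsym : ∀ z, (hessM f z).IsHermitian) (hM : 0 ≤ M) (z x y : Fin n → ℝ) :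
    (hessM f y - (1 + M * hessNorm f z (y - x))⁻¹ • hessM f x).PosSemidef :=
  posSemidef_sub_smul_of_dotProduct_mulVec_le (hsym x) (hsym y) fun u => by
    have hr := mul_nonneg hM (hessNorm_nonneg (f := f) z (y - x))
    rw [inv_mul_le_iff₀ (by positivity), ← hessNorm_sub_comm]
    exact hssc.dotProduct_mulVec_le z y x u

theorem smul_hessM_sub_avgHess_posSemidef (hssc : StronglySelfConcordant f M) (hf : ContDiff ℝ 2 f)
    (hsym : ∀ z, (hessM f z).IsHermitian) (z x y : Fin n → ℝ) :
    ((1 + M * hessNorm f z (y - x) / 2) • hessM f x - avgHess f x y).PosSemidef :=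
  posSemidef_smul_sub_of_dotProduct_mulVec_le (hsym x) (avgHess_isHermitian hsym x y) fun u => by
    rw [dotProduct_mulVec_avgHess hf]
    exact integral_le_of_le_one_add_mul
      (intervalIntegrable_dotProduct_mulVec_hessM_segment hf x y u)
      fun t ht => hssc.dotProduct_mulVec_segment_le z x y u ht.1

theorem avgHess_sub_smul_hessM_posSemidef (hssc : StronglySelfConcordant f M) (hf : ContDiff ℝ 2 f)
    (hpsd : ∀ z, (hessM f z).PosSemidef) (hM : 0 ≤ M) (z x y : Fin n → ℝ) :
    (avgHess f x y - (1 + M * hessNorm f z (y - x) / 2)⁻¹ • hessM f x).PosSemidef :=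
  posSemidef_sub_smul_of_dotProduct_mulVec_le (hpsd x).isHermitian
      (avgHess_isHermitian (fun w => (hpsd w).isHermitian) x y) fun u => by
    have hr := mul_nonneg hM (hessNorm_nonneg (f := f) z (y - x))
    have hc : 0 ≤ u ⬝ᵥ hessM f x *ᵥ u := by simpa using (hpsd x).dotProduct_mulVec_nonneg u
    rw [dotProduct_mulVec_avgHess hf, inv_mul_le_iff₀ (by positivity)]
    exact le_integral_of_le_one_add_mul
      (intervalIntegrable_dotProduct_mulVec_hessM_segment hf x y u) hr hc
      fun t ht => hssc.dotProduct_mulVec_le_segment z x y u ht.1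

end StronglySelfConcordant

theorem hessians_strongly_self_concordant {n : ℕ} (f : (Fin n → ℝ) → ℝ)
    (hf : ContDiff ℝ 2 f) (hpos : ∀ x, (hessM f x).PosDef)
    (M : ℝ) (hM : 0 ≤ M) (hssc : StronglySelfConcordant f M)
    (x y : Fin n → ℝ) :
    let r := Real.sqrt ((y - x) ⬝ᵥ (hessM f x).mulVec (y - x))
    let J := avgHess f x y
    ((1 + M * r) • hessM f x - hessM f y).PosSemidef ∧
      (hessM f y - (1 + M * r)⁻¹ • hessM f x).PosSemidef ∧
      ((1 + M * r / 2) • hessM f x - J).PosSemidef ∧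
      (J - (1 + M * r / 2)⁻¹ • hessM f x).PosSemidef ∧
      ((1 + M * r / 2) • hessM f y - J).PosSemidef ∧
      (J - (1 + M * r / 2)⁻¹ • hessM f y).PosSemidef := by
  intro r J
  have hpsd : ∀ z, (hessM f z).PosSemidef := fun z => (hpos z).posSemidef
  have hsym : ∀ z, (hessM f z).IsHermitian := fun z => (hpsd z).isHermitian
  have hJ : J = avgHess f y x := avgHess_comm x y
  have hr : r = hessNorm f x (x - y) := hessNorm_sub_comm (f := f) x y x
  refine ⟨hssc.smul_hessM_sub_hessM_posSemidef hsym x x y,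
    hssc.hessM_sub_smul_hessM_posSemidef hsym hM x x y,
    hssc.smul_hessM_sub_avgHess_posSemidef hf hsym x x y,
    hssc.avgHess_sub_smul_hessM_posSemidef hf hpsd hM x x y, ?_, ?_⟩ <;> rw [hJ, hr]
  · exact hssc.smul_hessM_sub_avgHess_posSemidef hf hsym x y x
  · exact hssc.avgHess_sub_smul_hessM_posSemidef hf hpsd hM x y x
end
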